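/- arXiv:2102.11864 — 8 statements merged into one kernel-verified Lean document; each statement's English description precedes it below -/
import Mathlib

section
/- Let G be a star with center vertex v on finite vertex set V, colored by col : V → C with |C| ≥ 2, let ℓ ≥ 1, and let X ⊆ V with v ∈ X and Y := V \ X. Let c₁ be a color maximizing cv_c(V) and let c₂ ≠ c₁ be a color maximizing cv_c(V) among colors different from c₁; assume cv_{c₁}(X) ≤ cv_{c₂}(V) + ℓ. Let c*₁ be a color maximizing cv_c(X), and let c*₂ ≠ c*₁ be a color maximizing cv_c(X) among colors c' ≠ c*₁ satisfying cv_{c'}(V) ≥ cv_{c*₁}(X) − ℓ. Set b_l := max(0, cv_{c₁}(V) − cv_{c₂}(V) − ℓ) and b_u := max(0, cv_{c*₁}(X) − cv_{c*₂}(X) − ℓ). Then for every positive integer k, there exists a partition of V into k nonempty ℓ-fair parts, each inducing a connected subgraph of G and with all vertices of X contained in a single part, if and only if b_l + 1 ≤ k ≤ |Y| + 1 − b_u. (This holds for any choice of the maximizers c₁, c₂, c*₁, c*₂ when there are ties.) -/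
/-!
In a star, a connected part avoiding the centre is a single vertex, so a partition as in the
theorem is one fair part `W ⊇ X` together with the `k - 1` vertices of `Wᶜ` as singletons
(fair because `ℓ ≥ 1`). For at least two colors, `W` is `ℓ`-fair iff every color is within `ℓ`
of some other color of `W`. Applied to `c₁` this gives `cv_{c₁}(V) ≤ cv_{c₂}(V) + ℓ + |Wᶜ|`,
applied to `c*₁` it gives `cv_{c*₁}(X) ≤ cv_{c*₂}(X) + ℓ + |W \ X|`: these are the two bounds.
Conversely, adding `b_u` vertices of `Y` of color `c*₂` to `X` gives a fair set, and a fair `W`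
can be grown by a vertex of `Wᶜ` as long as `|Wᶜ| > b_l`: a vertex whose color does not strictly
lead in `W` keeps `W` fair, and if all of `Wᶜ` has the strictly leading color, that color is `c₁`
and the new margin is at most `cv_{c₁}(V) - |Wᶜ| + 1 - cv_{c₂}(V) ≤ ℓ`.
-/

/-- Number of vertices of `W` having color `c`. -/
noncomputable def cv {V C : Type*} (col : V → C) (W : Set V) (c : C) : ℕ :=
  (W ∩ col ⁻¹' {c}).ncard

/-- Margin of victory of `W`: largest entry of the color-count vector minus the
second-largest entry (over the remaining colors); `|W|` if there is only one color. -/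
noncomputable def MOV {V C : Type*} [Fintype C] [DecidableEq C] (col : V → C) (W : Set V) : ℕ :=
  if h : Fintype.card C ≤ 1 then W.ncard
  else
    (Finset.univ.sup fun c => cv col W c) -
      Finset.univ.inf'
        (Finset.univ_nonempty_iff.mpr (Fintype.card_pos_iff.mp (by omega)))
        (fun c => (Finset.univ.erase c).sup fun c' => cv col W c')

/-- Equivalent to `MOV ≤ ℓ` when there are at least two colors, without singling out a
leading color. -/
def IsFair {C : Type*} (ℓ : ℕ) (f : C → ℕ) : Prop :=
  ∀ c, ∃ c' ≠ c, f c ≤ f c' + ℓ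

section IsFair

variable {C : Type*} {ℓ : ℕ} {f : C → ℕ}

theorem isFair_of_le [Nontrivial C] (h : ∀ c, f c ≤ ℓ) : IsFair ℓ f := fun c =>
  let ⟨c', hc'⟩ := exists_ne c
  ⟨c', hc', (h c).trans (Nat.le_add_left ℓ (f c'))⟩

variable [DecidableEq C]

theorem IsFair.add_single (hf : IsFair ℓ f) (hℓ : 1 ≤ ℓ) {c d : C} (hdc : d ≠ c)
    (hcd : f c ≤ f d) : IsFair ℓ (f + Pi.single c 1) := by
  intro e
  by_cases hec : e = c
  · subst hec
    exact ⟨d, hdc, by simp only [Pi.add_apply, Pi.single_apply, hdc, if_true, if_false]; omega⟩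
  · obtain ⟨c', hc'e, hle⟩ := hf e
    refine ⟨c', hc'e, ?_⟩
    simp only [Pi.add_apply, Pi.single_apply, hec, if_false]
    split_ifs <;> omega

theorem isFair_add_single_gap {a b : C} (hba : b ≠ a) (ha : ∀ c, f c ≤ f a) :
    IsFair ℓ (f + Pi.single b (f a - f b - ℓ)) := by
  have hb := ha b
  intro e
  by_cases hea : e = a
  · subst hea
    exact ⟨b, hba, by simp only [Pi.add_apply, Pi.single_apply, hba.symm, if_true, if_false]; omega⟩
  · refine ⟨a, Ne.symm hea, ?_⟩
    have he := ha e
    simp only [Pi.add_apply, Pi.single_apply, hba.symm, if_false]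
    split_ifs with heb
    · subst heb; omega
    · omega

end IsFair

section ColorCount

variable {V C : Type*} [Finite V] (col : V → C)

theorem cv_le_ncard (W : Set V) (c : C) : cv col W c ≤ W.ncard :=
  Set.ncard_le_ncard Set.inter_subset_left

theorem cv_union {A B : Set V} (h : Disjoint A B) : cv col (A ∪ B) = cv col A + cv col B := by
  ext c
  rw [cv, Set.union_inter_distrib_right]
  exact Set.ncard_union_eq (h.mono Set.inter_subset_left Set.inter_subset_left)

theorem cv_add_cv_compl (W : Set V) (c : C) :
    cv col W c + cv col Wᶜ c = cv col Set.univ c := by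
  rw [← Pi.add_apply, ← cv_union col disjoint_compl_right, Set.union_compl_self]

variable [DecidableEq C]

theorem cv_eq_single {S : Set V} {c : C} (h : ∀ u ∈ S, col u = c) :
    cv col S = Pi.single c S.ncard := by
  ext d
  rw [cv, Pi.single_apply]
  split_ifs with hdc
  · subst hdc
    exact congrArg Set.ncard (Set.inter_eq_self_of_subset_left h)
  · rw [Set.ncard_eq_zero]
    exact Set.eq_empty_of_forall_notMem fun u hu => hdc (hu.2.symm.trans (h u hu.1))

theorem cv_insert {W : Set V} {u : V} (hu : u ∉ W) :
    cv col (insert u W) = cv col W + Pi.single (col u) 1 := by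
  ext c
  unfold cv
  rw [Pi.add_apply, Pi.single_apply]
  split_ifs with hc
  · rw [Set.insert_inter_of_mem (hc ▸ rfl), Set.ncard_insert_of_notMem fun h => hu h.1]
  · rw [Set.insert_inter_of_notMem (s := W) (t := col ⁻¹' {c}) (Ne.symm hc), add_zero]

end ColorCount

theorem mov_le_iff_isFair {V C : Type*} [Fintype C] [DecidableEq C] (col : V → C)
    (hC : 2 ≤ Fintype.card C) (ℓ : ℕ) (W : Set V) :
    MOV col W ≤ ℓ ↔ IsFair ℓ (cv col W) := by
  rw [MOV, dif_neg (by omega), tsub_le_iff_tsub_le, Finset.le_inf'_iff]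
  simp only [Finset.mem_univ, true_imp_iff]
  refine forall_congr' fun c => ?_
  have herase : (Finset.univ.erase c).Nonempty := by
    rw [← Finset.card_pos, Finset.card_erase_of_mem (Finset.mem_univ c), Finset.card_univ]
    omega
  obtain ⟨c', hc', hsup⟩ := Finset.exists_mem_eq_sup _ herase (cv col W)
  rw [tsub_le_iff_right, Finset.sup_le_iff, hsup]
  simp only [Finset.mem_univ, true_imp_iff]
  constructor
  · exact fun h => ⟨c', Finset.ne_of_mem_erase hc', h c⟩
  · rintro ⟨d, hdc, hd⟩ e
    by_cases hec : e = c
    · subst hec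
      have := Finset.le_sup (f := cv col W) (Finset.mem_erase.2 ⟨hdc, Finset.mem_univ d⟩)
      exact hd.trans (add_le_add_left (hsup ▸ this) ℓ)
    · exact le_add_right (hsup ▸ Finset.le_sup (Finset.mem_erase.2 ⟨hec, Finset.mem_univ e⟩))

section FairSets

variable {V C : Type*} [Finite V] {col : V → C} {ℓ : ℕ} {X W : Set V}

theorem IsFair.sub_le_ncard_compl {c₁ c₂ : C} (hW : IsFair ℓ (cv col W))
    (hc₂ : ∀ c, c ≠ c₁ → cv col Set.univ c ≤ cv col Set.univ c₂) :
    cv col Set.univ c₁ - cv col Set.univ c₂ - ℓ ≤ Wᶜ.ncard := by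
  obtain ⟨c, hc, hle⟩ := hW c₁
  have := cv_add_cv_compl col W c₁
  have := cv_add_cv_compl col W c
  have := cv_le_ncard col Wᶜ c₁
  have := hc₂ c hc
  omega

theorem IsFair.sub_le_ncard_diff {cs₁ cs₂ : C} (hW : IsFair ℓ (cv col W)) (hXW : X ⊆ W)
    (hcs₂ : ∀ c, c ≠ cs₁ → cv col X cs₁ ≤ cv col Set.univ c + ℓ → cv col X c ≤ cv col X cs₂) :
    cv col X cs₁ - cv col X cs₂ - ℓ ≤ (W \ X).ncard := by
  obtain ⟨c, hc, hle⟩ := hW cs₁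
  have hsplit : cv col W = cv col X + cv col (W \ X) := by
    rw [← cv_union col Set.disjoint_sdiff_right, Set.union_sdiff_cancel hXW]
  have h₁ := congrFun hsplit cs₁
  have h₂ := congrFun hsplit c
  simp only [Pi.add_apply] at h₁ h₂
  have := cv_add_cv_compl col W c
  have := cv_le_ncard col (W \ X) c
  have := hcs₂ c hc (by omega)
  omega

variable [DecidableEq C]

theorem exists_insert_isFair {c₁ c₂ : C} (hℓ : 1 ≤ ℓ)
    (hc₁ : ∀ c, cv col Set.univ c ≤ cv col Set.univ c₁) (hc₂ne : c₂ ≠ c₁)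
    (hc₂ : ∀ c, c ≠ c₁ → cv col Set.univ c ≤ cv col Set.univ c₂)
    (hW : IsFair ℓ (cv col W))
    (hcard : cv col Set.univ c₁ - cv col Set.univ c₂ - ℓ + 1 ≤ Wᶜ.ncard) :
    ∃ u ∉ W, IsFair ℓ (cv col (insert u W)) := by
  by_cases hweak : ∃ u ∉ W, ∃ d ≠ col u, cv col W (col u) ≤ cv col W d
  · obtain ⟨u, hu, d, hd, hle⟩ := hweak
    exact ⟨u, hu, cv_insert col hu ▸ hW.add_single hℓ hd hle⟩
  -- Otherwise all of `Wᶜ` has the strict leading color of `W`, which is then `c₁`.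
  push Not at hweak
  obtain ⟨u, hu⟩ : Wᶜ.Nonempty := Set.nonempty_of_ncard_ne_zero (by omega)
  have hmono : ∀ w ∈ Wᶜ, col w = col u := fun w hw => by
    by_contra h
    have := hweak w hw (col u) (Ne.symm h)
    have := hweak u hu (col w) h
    omega
  have hsplit : ∀ c, cv col W c + (Pi.single (col u) Wᶜ.ncard : C → ℕ) c = cv col Set.univ c :=
    fun c => by rw [← cv_eq_single col hmono, cv_add_cv_compl]
  have hcu : col u = c₁ := by
    by_contra h
    have h₁ := hsplit c₁
    have h₂ := hsplit (col u)
    simp only [Pi.single_apply, Ne.symm h, if_true, if_false] at h₁ h₂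
    have := hweak u hu c₁ (Ne.symm h)
    have := hc₁ (col u)
    omega
  refine ⟨u, hu, ?_⟩
  rw [cv_insert col hu, hcu]
  intro e
  by_cases he : e = c₁
  · subst he
    refine ⟨c₂, hc₂ne, ?_⟩
    have h₁ := hsplit c₂
    have h₂ := hsplit (col u)
    simp only [Pi.add_apply, Pi.single_apply, hc₂ne, hcu, if_true, if_false] at h₁ h₂ ⊢
    omega
  · refine ⟨c₁, Ne.symm he, ?_⟩
    have := hweak u hu e (hcu ▸ he)
    simp only [Pi.add_apply, Pi.single_apply, he, if_true, if_false]
    rw [hcu] at this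
    omega

theorem exists_isFair_superset_gap {cs₁ cs₂ : C} (hcs₁ : ∀ c, cv col X c ≤ cv col X cs₁)
    (hcs₂ne : cs₂ ≠ cs₁) (hcs₂mem : cv col X cs₁ ≤ cv col Set.univ cs₂ + ℓ) :
    ∃ W, X ⊆ W ∧ IsFair ℓ (cv col W) ∧
      Wᶜ.ncard + (cv col X cs₁ - cv col X cs₂ - ℓ) = Xᶜ.ncard := by
  have hY : cv col X cs₁ - cv col X cs₂ - ℓ ≤ cv col Xᶜ cs₂ := by
    have := cv_add_cv_compl col X cs₂
    omega
  obtain ⟨S, hS, hScard⟩ := Set.exists_subset_card_eq hY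
  have hSY : S ⊆ Xᶜ := hS.trans Set.inter_subset_left
  refine ⟨X ∪ S, Set.subset_union_left, ?_, ?_⟩
  · rw [cv_union col (disjoint_compl_right.mono_right hSY),
      cv_eq_single col fun u hu => (hS hu).2, hScard]
    exact isFair_add_single_gap hcs₂ne hcs₁
  · rw [Set.compl_union, ← Set.sdiff_eq, Set.ncard_sdiff hSY, hScard]
    have := Set.ncard_le_ncard hSY
    omega

theorem exists_isFair_superset {c₁ c₂ cs₁ cs₂ : C} (hℓ : 1 ≤ ℓ)
    (hc₁ : ∀ c, cv col Set.univ c ≤ cv col Set.univ c₁) (hc₂ne : c₂ ≠ c₁)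
    (hc₂ : ∀ c, c ≠ c₁ → cv col Set.univ c ≤ cv col Set.univ c₂)
    (hcs₁ : ∀ c, cv col X c ≤ cv col X cs₁) (hcs₂ne : cs₂ ≠ cs₁)
    (hcs₂mem : cv col X cs₁ ≤ cv col Set.univ cs₂ + ℓ) {m : ℕ}
    (hm₁ : cv col X cs₁ - cv col X cs₂ - ℓ ≤ m)
    (hm₂ : m + (cv col Set.univ c₁ - cv col Set.univ c₂ - ℓ) ≤ Xᶜ.ncard) :
    ∃ W, X ⊆ W ∧ IsFair ℓ (cv col W) ∧ Wᶜ.ncard + m = Xᶜ.ncard := by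
  induction m, hm₁ using Nat.le_induction with
  | base => exact exists_isFair_superset_gap hcs₁ hcs₂ne hcs₂mem
  | succ m _ ih =>
    obtain ⟨W, hXW, hW, hcard⟩ := ih (by omega)
    obtain ⟨u, hu, hfair⟩ := exists_insert_isFair hℓ hc₁ hc₂ne hc₂ hW (by omega)
    refine ⟨insert u W, hXW.trans (Set.subset_insert u W), hfair, ?_⟩
    have h₁ := Set.ncard_compl_add_ncard (insert u W)
    have h₂ := Set.ncard_compl_add_ncard W
    rw [Set.ncard_insert_of_notMem hu] at h₁
    omega

end FairSets

section Star

variable {V : Type*} {G : SimpleGraph V} {v : V}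

theorem connected_induce_of_center_mem
    (hstar : ∀ a b : V, G.Adj a b ↔ (a ≠ b ∧ (a = v ∨ b = v))) {P : Set V} (hv : v ∈ P) :
    (G.induce P).Connected := by
  have hreach : ∀ a : P, (G.induce P).Reachable a ⟨v, hv⟩ := fun a => by
    by_cases ha : (a : V) = v
    · rw [show a = ⟨v, hv⟩ from Subtype.ext ha]
    · exact SimpleGraph.Adj.reachable ((hstar a v).2 ⟨ha, Or.inr rfl⟩)
  have : Nonempty P := ⟨⟨v, hv⟩⟩
  exact ⟨fun a b => (hreach a).trans (hreach b).symm⟩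

theorem exists_eq_singleton_of_connected_induce
    (hstar : ∀ a b : V, G.Adj a b ↔ (a ≠ b ∧ (a = v ∨ b = v))) {P : Set V}
    (hP : (G.induce P).Connected) (hv : v ∉ P) : ∃ u, P = {u} := by
  have hbot : G.induce P = ⊥ := by
    ext a b
    simp only [SimpleGraph.induce_adj, hstar,
      SimpleGraph.bot_adj, iff_false, not_and, not_or]
    exact fun _ => ⟨fun h => hv (h ▸ a.2), fun h => hv (h ▸ b.2)⟩
  rw [hbot, SimpleGraph.connected_bot_iff] at hP
  obtain ⟨hsub, ⟨u, hu⟩⟩ := hP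
  exact ⟨u, (Set.subsingleton_coe P).1 hsub |>.eq_singleton_of_mem hu⟩

end Star

section StarPartition

variable {V : Type*} [Finite V] {G : SimpleGraph V} {v : V}

theorem ncard_compl_add_one_of_partition
    (hstar : ∀ a b : V, G.Adj a b ↔ (a ≠ b ∧ (a = v ∨ b = v))) {k : ℕ} {P : Fin k → Set V}
    (hdisj : ∀ i j, i ≠ j → Disjoint (P i) (P j)) (hcover : (⋃ i, P i) = Set.univ)
    (hconn : ∀ i, (G.induce (P i)).Connected) {i₀ : Fin k} (hv : v ∈ P i₀) :
    (P i₀)ᶜ.ncard + 1 = k := by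
  have hsingle : ∀ j ∈ ({i₀}ᶜ : Finset (Fin k)), (P j).ncard = 1 := fun j hj => by
    have hj : j ≠ i₀ := by simpa using hj
    obtain ⟨u, hu⟩ := exists_eq_singleton_of_connected_induce hstar (hconn j)
      fun h => (hdisj j i₀ hj).ne_of_mem h hv rfl
    rw [hu, Set.ncard_singleton]
  have hsum := Set.ncard_iUnion_of_finite (fun i => Set.toFinite (P i)) hdisj
  rw [hcover, finsum_eq_sum_of_fintype, Fintype.sum_eq_add_sum_compl i₀,
    Finset.sum_congr rfl hsingle, Finset.sum_const, Finset.card_compl, Finset.card_singleton,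
    Fintype.card_fin, smul_eq_mul, mul_one] at hsum
  have := Set.ncard_compl_add_ncard (P i₀)
  have := i₀.pos
  rw [Set.ncard_univ] at hsum
  omega

theorem exists_partition_iff_exists_part
    (hstar : ∀ a b : V, G.Adj a b ↔ (a ≠ b ∧ (a = v ∨ b = v))) {X : Set V} (hvX : v ∈ X)
    (Fair : Set V → Prop) (hFair : ∀ u, Fair {u}) (k : ℕ) :
    (∃ P : Fin k → Set V,
        (∀ i, (P i).Nonempty) ∧
        (∀ i j, i ≠ j → Disjoint (P i) (P j)) ∧
        (⋃ i, P i) = Set.univ ∧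
        (∀ i, (G.induce (P i)).Connected) ∧
        (∀ i, Fair (P i)) ∧
        (∃ i, X ⊆ P i)) ↔
      ∃ W, X ⊆ W ∧ Fair W ∧ Wᶜ.ncard + 1 = k := by
  constructor
  · rintro ⟨P, -, hdisj, hcover, hconn, hfair, i₀, hX⟩
    exact ⟨P i₀, hX, hfair i₀,
      ncard_compl_add_one_of_partition hstar hdisj hcover hconn (hX hvX)⟩
  rintro ⟨W, hXW, hW, rfl⟩
  obtain ⟨e⟩ : Nonempty (Fin Wᶜ.ncard ≃ ↥Wᶜ) := by
    rw [← Nat.card_coe_set_eq]; exact ⟨(Finite.equivFin ↥Wᶜ).symm⟩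
  refine ⟨Fin.cons W fun j => {(e j : V)}, ?_, ?_, ?_, ?_, ?_, ⟨0, hXW⟩⟩
  · exact Fin.forall_fin_succ.2 ⟨⟨v, hXW hvX⟩, fun j => Set.singleton_nonempty _⟩
  · intro i j hij
    cases i using Fin.cases <;> cases j using Fin.cases
    · exact absurd rfl hij
    · exact Set.disjoint_singleton_right.2 (e _).2
    · exact Set.disjoint_singleton_left.2 (e _).2
    · exact Set.disjoint_singleton.2 fun h => hij (congrArg Fin.succ (e.injective (Subtype.ext h)))
  · refine Set.eq_univ_of_forall fun u => Set.mem_iUnion.2 ?_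
    by_cases hu : u ∈ W
    · exact ⟨0, hu⟩
    · exact ⟨(e.symm ⟨u, hu⟩).succ, by simp⟩
  · refine Fin.forall_fin_succ.2 ⟨connected_induce_of_center_mem hstar (hXW hvX), fun j => ?_⟩
    show (G.induce {(e j : V)}).Connected
    rw [SimpleGraph.induce_singleton_eq_top]
    exact SimpleGraph.connected_top
  · exact Fin.forall_fin_succ.2 ⟨hW, fun j => hFair _⟩

end StarPartition

theorem stmt0_general {V C : Type*} [Fintype V] [Fintype C] [DecidableEq C]
    (G : SimpleGraph V) (v : V)
    (hstar : ∀ a b : V, G.Adj a b ↔ (a ≠ b ∧ (a = v ∨ b = v)))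
    (col : V → C) (hC : 2 ≤ Fintype.card C)
    (ℓ : ℕ) (hℓ : 1 ≤ ℓ)
    (X : Set V) (hvX : v ∈ X)
    (c₁ c₂ cs₁ cs₂ : C)
    (hc₁ : ∀ c, cv col Set.univ c ≤ cv col Set.univ c₁)
    (hc₂ne : c₂ ≠ c₁)
    (hc₂ : ∀ c, c ≠ c₁ → cv col Set.univ c ≤ cv col Set.univ c₂)
    (hcs₁ : ∀ c, cv col X c ≤ cv col X cs₁)
    (hcs₂ne : cs₂ ≠ cs₁)
    (hcs₂mem : cv col X cs₁ ≤ cv col Set.univ cs₂ + ℓ)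
    (hcs₂ : ∀ c, c ≠ cs₁ → cv col X cs₁ ≤ cv col Set.univ c + ℓ → cv col X c ≤ cv col X cs₂)
    (k : ℕ) :
    (∃ P : Fin k → Set V,
        (∀ i, (P i).Nonempty) ∧
        (∀ i j, i ≠ j → Disjoint (P i) (P j)) ∧
        (⋃ i, P i) = Set.univ ∧
        (∀ i, (G.induce (P i)).Connected) ∧
        (∀ i, MOV col (P i) ≤ ℓ) ∧
        (∃ i, X ⊆ P i)) ↔
      ((cv col Set.univ c₁ - cv col Set.univ c₂ - ℓ) + 1 ≤ k ∧
        k + (cv col X cs₁ - cv col X cs₂ - ℓ) ≤ Xᶜ.ncard + 1) := by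
  have : Nontrivial C := Fintype.one_lt_card_iff_nontrivial.1 hC
  have hsingleton : ∀ u, MOV col {u} ≤ ℓ := fun u => (mov_le_iff_isFair col hC ℓ {u}).2 <|
    isFair_of_le fun c => (cv_le_ncard col {u} c).trans (Set.ncard_singleton u ▸ hℓ)
  rw [exists_partition_iff_exists_part hstar hvX (fun W => MOV col W ≤ ℓ) hsingleton]
  simp only [mov_le_iff_isFair col hC]
  constructor
  · rintro ⟨W, hXW, hW, rfl⟩
    have hlower := hW.sub_le_ncard_compl hc₂
    have hupper := hW.sub_le_ncard_diff hXW hcs₂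
    have hXW' := Set.compl_subset_compl.2 hXW
    rw [← compl_sdiff_compl, Set.ncard_sdiff hXW'] at hupper
    have := Set.ncard_le_ncard hXW'
    omega
  · rintro ⟨hlower, hupper⟩
    obtain ⟨W, hXW, hW, hcard⟩ := exists_isFair_superset (m := Xᶜ.ncard + 1 - k)
      hℓ hc₁ hc₂ne hc₂ hcs₁ hcs₂ne hcs₂mem (by omega) (by omega)
    exact ⟨W, hXW, hW, by omega⟩

theorem stmt0 {V C : Type*} [Fintype V] [Fintype C] [DecidableEq C]
    (G : SimpleGraph V) (v : V)
    (hstar : ∀ a b : V, G.Adj a b ↔ (a ≠ b ∧ (a = v ∨ b = v)))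
    (col : V → C) (hC : 2 ≤ Fintype.card C)
    (ℓ : ℕ) (hℓ : 1 ≤ ℓ)
    (X : Set V) (hvX : v ∈ X)
    (c₁ c₂ cs₁ cs₂ : C)
    (hc₁ : ∀ c, cv col Set.univ c ≤ cv col Set.univ c₁)
    (hc₂ne : c₂ ≠ c₁)
    (hc₂ : ∀ c, c ≠ c₁ → cv col Set.univ c ≤ cv col Set.univ c₂)
    (hXbound : cv col X c₁ ≤ cv col Set.univ c₂ + ℓ)
    (hcs₁ : ∀ c, cv col X c ≤ cv col X cs₁)
    (hcs₂ne : cs₂ ≠ cs₁)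
    (hcs₂mem : cv col X cs₁ ≤ cv col Set.univ cs₂ + ℓ)
    (hcs₂ : ∀ c, c ≠ cs₁ → cv col X cs₁ ≤ cv col Set.univ c + ℓ → cv col X c ≤ cv col X cs₂)
    (k : ℕ) (hk : 1 ≤ k) :
    (∃ P : Fin k → Set V,
        (∀ i, (P i).Nonempty) ∧
        (∀ i j, i ≠ j → Disjoint (P i) (P j)) ∧
        (⋃ i, P i) = Set.univ ∧
        (∀ i, (G.induce (P i)).Connected) ∧
        (∀ i, MOV col (P i) ≤ ℓ) ∧
        (∃ i, X ⊆ P i)) ↔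
      ((cv col Set.univ c₁ - cv col Set.univ c₂ - ℓ) + 1 ≤ k ∧
        k + (cv col X cs₁ - cv col X cs₂ - ℓ) ≤ Xᶜ.ncard + 1) :=
  stmt0_general G v hstar col hC ℓ hℓ X hvX c₁ c₂ cs₁ cs₂ hc₁ hc₂ne hc₂ hcs₁ hcs₂ne hcs₂mem hcs₂ k
end

section
/- Let G = (V, E) be a finite simple graph and S ⊆ V a vertex cover of G (i.e., every edge of G has at least one endpoint in S). Let (V₁, …, V_k) be a partition of V into nonempty parts such that each induced subgraph G[V_i] is connected. Then at most |S| of the parts contain at least one vertex of S; moreover, for every part V_i with S ∩ V_i ≠ ∅, there exists a set J_i ⊆ V_i \ S with |J_i| ≤ |S ∩ V_i| − 1 such that the induced subgraph G[(S ∩ V_i) ∪ J_i] is connected. -/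
open SimpleGraph

section Aux

variable {V : Type*} [Fintype V]

private def inclHom (G : SimpleGraph V) {U U' : Set V} (h : U ⊆ U') :
    G.induce U →g G.induce U' :=
  ⟨Set.inclusion h, fun {a b} hab => hab⟩

private def valHom (G : SimpleGraph V) (W : Set V) : G.induce W →g G :=
  ⟨Subtype.val, fun {a b} hab => hab⟩

private lemma walk_lemma (G : SimpleGraph V) (W U : Set V) (hUW : U ⊆ W)
    (hind : ∀ a b, a ∈ W → b ∈ W → a ∉ U → G.Adj a b → b ∈ U) :
    ∀ (n : ℕ) (x y : V) (hx : x ∈ U) (hy : y ∈ U) (p : G.Walk x y),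
      p.length ≤ n → (∀ z ∈ p.support, z ∈ W) →
      ¬ (G.induce U).Reachable ⟨x, hx⟩ ⟨y, hy⟩ →
      ∃ (v u₁ u₂ : V) (_ : v ∈ W \ U) (h₁ : u₁ ∈ U) (h₂ : u₂ ∈ U),
        G.Adj v u₁ ∧ G.Adj v u₂ ∧ ¬ (G.induce U).Reachable ⟨u₁, h₁⟩ ⟨u₂, h₂⟩ := by
  intro n
  induction n with
  | zero =>
    intro x y hx hy p hlen hsup hreach
    have : x = y := p.eq_of_length_eq_zero (Nat.le_zero.mp hlen)
    subst this
    exact absurd (Reachable.refl _) hreach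
  | succ n ih =>
    intro x y hx hy p hlen hsup hreach
    cases p with
    | nil => exact absurd (Reachable.refl _) hreach
    | cons h q =>
      rename_i w
      by_cases hwU : w ∈ U
      · have hadj : (G.induce U).Adj ⟨x, hx⟩ ⟨w, hwU⟩ := h
        have hnr : ¬ (G.induce U).Reachable ⟨w, hwU⟩ ⟨y, hy⟩ :=
          fun hr => hreach (hadj.reachable.trans hr)
        exact ih w y hwU hy q (by simpa using Nat.le_of_succ_le_succ hlen)
          (fun z hz => hsup z (by simp [Walk.support_cons, hz])) hnr
      · cases q with
        | nil => exact absurd hy hwU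
        | cons h2 r =>
          rename_i w2
          have hwW : w ∈ W := hsup w (by simp)
          have hw2W : w2 ∈ W := hsup w2 (by simp)
          have hw2U : w2 ∈ U := hind w w2 hwW hw2W hwU h2
          by_cases hr : (G.induce U).Reachable ⟨x, hx⟩ ⟨w2, hw2U⟩
          · have hnr : ¬ (G.induce U).Reachable ⟨w2, hw2U⟩ ⟨y, hy⟩ :=
              fun hr2 => hreach (hr.trans hr2)
            exact ih w2 y hw2U hy r
              (by simp only [Walk.length_cons] at hlen; omega)
              (fun z hz => hsup z (by simp [Walk.support_cons, hz])) hnr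
          · exact ⟨w, x, w2, ⟨hwW, hwU⟩, hx, hw2U, h.symm, h2, hr⟩

private lemma merge (G : SimpleGraph V) (U : Set V) (v : V) (hv : v ∉ U)
    (u₁ u₂ : V) (h₁ : u₁ ∈ U) (h₂ : u₂ ∈ U)
    (ha₁ : G.Adj v u₁) (ha₂ : G.Adj v u₂)
    (hnr : ¬ (G.induce U).Reachable ⟨u₁, h₁⟩ ⟨u₂, h₂⟩) :
    Nat.card (G.induce (insert v U)).ConnectedComponent <
      Nat.card (G.induce U).ConnectedComponent := by
  classical
  have hsub : U ⊆ insert v U := Set.subset_insert v U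
  set f : (G.induce U).ConnectedComponent → (G.induce (insert v U)).ConnectedComponent :=
    ConnectedComponent.map (inclHom G hsub) with hf
  have hvmem : v ∈ insert v U := Set.mem_insert v U
  have hadj1 : (G.induce (insert v U)).Adj ⟨v, hvmem⟩ ⟨u₁, hsub h₁⟩ := ha₁
  have hadj2 : (G.induce (insert v U)).Adj ⟨v, hvmem⟩ ⟨u₂, hsub h₂⟩ := ha₂
  have hsurj : Function.Surjective f := by
    intro c
    obtain ⟨⟨z, hz⟩, rfl⟩ := c.exists_rep
    rcases Set.mem_insert_iff.mp hz with hzv | hzU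
    · subst hzv
      refine ⟨(G.induce U).connectedComponentMk ⟨u₁, h₁⟩, ?_⟩
      rw [hf, ConnectedComponent.map_mk]
      exact (ConnectedComponent.sound hadj1.reachable.symm)
    · exact ⟨(G.induce U).connectedComponentMk ⟨z, hzU⟩, by rw [hf, ConnectedComponent.map_mk]; rfl⟩
  have hninj : ¬ Function.Injective f := by
    intro hinj
    apply hnr
    have h12 : f ((G.induce U).connectedComponentMk ⟨u₁, h₁⟩) =
        f ((G.induce U).connectedComponentMk ⟨u₂, h₂⟩) := by
      rw [hf, ConnectedComponent.map_mk, ConnectedComponent.map_mk]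
      exact (ConnectedComponent.sound (hadj1.reachable.symm.trans hadj2.reachable))
    exact ConnectedComponent.exact (hinj h12)
  have hle : Nat.card (G.induce (insert v U)).ConnectedComponent ≤
      Nat.card (G.induce U).ConnectedComponent :=
    Nat.card_le_card_of_surjective f hsurj
  rcases lt_or_eq_of_le hle with hlt | heq
  · exact hlt
  · exact absurd ((Nat.bijective_iff_surjective_and_card f).mpr ⟨hsurj, heq.symm⟩).injective hninj

private lemma build (G : SimpleGraph V) (W A : Set V) (hAW : A ⊆ W) (hA : A.Nonempty)
    (hWconn : (G.induce W).Connected)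
    (hind : ∀ a b, a ∈ W → b ∈ W → a ∉ A → G.Adj a b → b ∈ A) :
    ∀ (n : ℕ) (J : Set V), J ⊆ W \ A →
      Nat.card (G.induce (A ∪ J)).ConnectedComponent ≤ n →
      ∃ J', J' ⊆ W \ A ∧
        J'.ncard + 1 ≤ J.ncard + Nat.card (G.induce (A ∪ J)).ConnectedComponent ∧
        (G.induce (A ∪ J')).Connected := by
  intro n
  induction n with
  | zero =>
    intro J hJ hcard
    exfalso
    obtain ⟨a, ha⟩ := hA
    haveI : Nonempty (G.induce (A ∪ J)).ConnectedComponent :=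
      ⟨(G.induce (A ∪ J)).connectedComponentMk ⟨a, Or.inl ha⟩⟩
    have := Nat.card_pos (α := (G.induce (A ∪ J)).ConnectedComponent)
    omega
  | succ n ih =>
    intro J hJ hcard
    obtain ⟨a, ha⟩ := hA
    haveI : Nonempty ↥(A ∪ J) := ⟨⟨a, Or.inl ha⟩⟩
    haveI hne : Nonempty (G.induce (A ∪ J)).ConnectedComponent :=
      ⟨(G.induce (A ∪ J)).connectedComponentMk ⟨a, Or.inl ha⟩⟩
    have hpos := Nat.card_pos (α := (G.induce (A ∪ J)).ConnectedComponent)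
    by_cases hc : (G.induce (A ∪ J)).Connected
    · exact ⟨J, hJ, by omega, hc⟩
    · have hnp : ¬ (G.induce (A ∪ J)).Preconnected := fun h => hc ⟨h⟩
      rw [Preconnected] at hnp
      push_neg at hnp
      obtain ⟨⟨x, hx⟩, ⟨y, hy⟩, hnr⟩ := hnp
      have hUW : A ∪ J ⊆ W := by
        intro z hz
        rcases hz with hz | hz
        · exact hAW hz
        · exact (hJ hz).1
      have hreachW : (G.induce W).Reachable ⟨x, hUW hx⟩ ⟨y, hUW hy⟩ :=
        hWconn.preconnected _ _
      obtain ⟨q⟩ := hreachW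
      have hind' : ∀ a b, a ∈ W → b ∈ W → a ∉ A ∪ J → G.Adj a b → b ∈ A ∪ J :=
        fun a b haW hbW haU hab => Or.inl (hind a b haW hbW (fun h => haU (Or.inl h)) hab)
      obtain ⟨v, u₁, u₂, hv, h₁, h₂, ha₁, ha₂, hnr'⟩ :=
        walk_lemma G W (A ∪ J) hUW hind' (q.map (valHom G W)).length x y hx hy
          (q.map (valHom G W)) le_rfl
          (by
            intro z hz
            replace hz := Eq.subst (motive := fun l => z ∈ l) (Walk.support_map (valHom G W) q) hz
            obtain ⟨⟨z', hz'⟩, _, rfl⟩ := List.mem_map.mp hz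
            exact hz')
          hnr
      have hmerge := merge G (A ∪ J) v hv.2 u₁ u₂ h₁ h₂ ha₁ ha₂ hnr'
      have hJ₂ : insert v J ⊆ W \ A := by
        intro z hz
        rcases Set.mem_insert_iff.mp hz with rfl | hzJ
        · exact ⟨hv.1, fun h => hv.2 (Or.inl h)⟩
        · exact hJ hzJ
      have hunion : A ∪ insert v J = insert v (A ∪ J) := Set.union_insert
      have hcard2 : Nat.card (G.induce (A ∪ insert v J)).ConnectedComponent ≤ n := by
        rw [hunion]; omega
      obtain ⟨J', hJ'sub, hJ'card, hJ'conn⟩ := ih (insert v J) hJ₂ hcard2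
      have hvJ : v ∉ J := fun h => hv.2 (Or.inr h)
      have hins : (insert v J).ncard = J.ncard + 1 :=
        Set.ncard_insert_of_notMem hvJ J.toFinite
      rw [hins, hunion] at hJ'card
      exact ⟨J', hJ'sub, by omega, hJ'conn⟩

private lemma key (G : SimpleGraph V) (W A : Set V) (hAW : A ⊆ W) (hA : A.Nonempty)
    (hWconn : (G.induce W).Connected)
    (hind : ∀ a b, a ∈ W → b ∈ W → a ∉ A → G.Adj a b → b ∈ A) :
    ∃ J : Set V, J ⊆ W \ A ∧ J.ncard + 1 ≤ A.ncard ∧ (G.induce (A ∪ J)).Connected := by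
  obtain ⟨J, hJsub, hJcard, hJconn⟩ := build G W A hAW hA hWconn hind
    (Nat.card (G.induce (A ∪ (∅ : Set V))).ConnectedComponent) ∅ (Set.empty_subset _) le_rfl
  refine ⟨J, hJsub, ?_, hJconn⟩
  have hsurj : Function.Surjective ((G.induce A).connectedComponentMk) :=
    fun c => c.exists_rep
  have hle : Nat.card (G.induce A).ConnectedComponent ≤ Nat.card ↥A :=
    Nat.card_le_card_of_surjective _ hsurj
  rw [Set.union_empty] at hJcard
  rw [Nat.card_coe_set_eq] at hle
  simp only [Set.ncard_empty, zero_add] at hJcard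
  omega

end Aux

theorem stmt1 {V : Type*} [Fintype V] (G : SimpleGraph V)
    (S : Set V) (hS : ∀ a b : V, G.Adj a b → a ∈ S ∨ b ∈ S)
    (k : ℕ) (P : Fin k → Set V)
    (hne : ∀ i, (P i).Nonempty)
    (hdisj : ∀ i j, i ≠ j → Disjoint (P i) (P j))
    (hcov : (⋃ i, P i) = Set.univ)
    (hconn : ∀ i, (G.induce (P i)).Connected) :
    {i : Fin k | (S ∩ P i).Nonempty}.ncard ≤ S.ncard ∧
      ∀ i, (S ∩ P i).Nonempty →
        ∃ J : Set V, J ⊆ P i \ S ∧ J.ncard + 1 ≤ (S ∩ P i).ncard ∧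
          (G.induce ((S ∩ P i) ∪ J)).Connected := by
  constructor
  · have h1 : ∀ i : Fin k, ∃ v, (S ∩ P i).Nonempty → v ∈ S ∩ P i := by
      intro i
      by_cases h : (S ∩ P i).Nonempty
      · exact ⟨h.choose, fun _ => h.choose_spec⟩
      · exact ⟨(hne i).choose, fun h' => absurd h' h⟩
    choose f hf using h1
    apply Set.ncard_le_ncard_of_injOn f
    · intro i hi
      exact (hf i hi).1
    · intro i hi j hj hij
      by_contra hne'
      exact Set.disjoint_left.mp (hdisj i j hne') (hf i hi).2 (hij ▸ (hf j hj).2)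
  · intro i hSi
    have hAW : S ∩ P i ⊆ P i := Set.inter_subset_right
    have hind : ∀ a b, a ∈ P i → b ∈ P i → a ∉ S ∩ P i → G.Adj a b → b ∈ S ∩ P i := by
      intro a b ha hb haS hab
      rcases hS a b hab with h | h
      · exact absurd ⟨h, ha⟩ haS
      · exact ⟨h, hb⟩
    obtain ⟨J, hJsub, hJcard, hJconn⟩ := key G (P i) (S ∩ P i) hAW hSi (hconn i) hind
    refine ⟨J, ?_, hJcard, hJconn⟩
    intro z hz
    obtain ⟨hzP, hzA⟩ := hJsub hz
    exact ⟨hzP, fun h => hzA ⟨h, hzP⟩⟩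
end

section
/- Let G = (V, E) be a finite simple graph with coloring col : V → C, let n = |V|, and let f ≥ 0 be an integer with |E| ≤ n + f − 1. Then for all k ≥ 1 and ℓ ≥ 0, the vertex set V admits a partition into k nonempty ℓ-fair parts each inducing a connected subgraph of G if and only if there exists an edge set E' ⊆ E with |E'| ≤ f + k − 1 such that the spanning subgraph (V, E \ E') has exactly k connected components and the vertex set of each of these components is ℓ-fair. -/
section AuxStmt3

open SimpleGraph

variable {V : Type*}

lemma aux_reach_induce_mono {H G : SimpleGraph V} (h : H ≤ G) {s t : Set V} (hst : s ⊆ t)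
    {u v : s} (hr : (H.induce s).Reachable u v) :
    (G.induce t).Reachable ⟨u, hst u.2⟩ ⟨v, hst v.2⟩ := by
  exact hr.map
    ({ toFun := fun x => ⟨x.1, hst x.2⟩, map_rel' := fun ha => h ha } : H.induce s →g G.induce t)

lemma aux_connected_induce_supp (H : SimpleGraph V) (c : H.ConnectedComponent) :
    (H.induce c.supp).Connected := by
  obtain ⟨v, hv⟩ := c.exists_rep
  rw [connected_iff]
  constructor
  · rintro ⟨u, hu⟩ ⟨w, hw⟩
    rw [ConnectedComponent.mem_supp_iff] at hu hw
    obtain ⟨p⟩ : H.Reachable u w := ConnectedComponent.exact (hu.trans hw.symm)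
    have hsub : {x | x ∈ p.support} ⊆ c.supp := by
      intro x hx
      classical
      rw [ConnectedComponent.mem_supp_iff, ← hu]
      exact ConnectedComponent.sound (p.takeUntil x hx).reverse.reachable
    have := (p.connected_induce_support).preconnected
      ⟨u, p.start_mem_support⟩ ⟨w, p.end_mem_support⟩
    exact aux_reach_induce_mono le_rfl hsub this
  · exact ⟨⟨v, by rw [ConnectedComponent.mem_supp_iff]; exact hv⟩⟩

lemma aux_reach_del {H : SimpleGraph V} {u v : V} {e : Sym2 V} (he : e = s(u,v)) {w x : V}
    (p : H.Walk w x) :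
    (H.deleteEdges {e}).Reachable w x ∨
      (((H.deleteEdges {e}).Reachable w u ∨ (H.deleteEdges {e}).Reachable w v) ∧
       ((H.deleteEdges {e}).Reachable x u ∨ (H.deleteEdges {e}).Reachable x v)) := by
  classical
  induction p with
  | nil => exact Or.inl (Reachable.refl _)
  | @cons a b x h q ih =>
    by_cases hab : s(a, b) = e
    · rw [he, Sym2.eq_iff] at hab
      have hbuv : b = u ∨ b = v := by tauto
      have hauv : (H.deleteEdges {e}).Reachable a u ∨ (H.deleteEdges {e}).Reachable a v := by
        rcases hab with ⟨ha, _⟩ | ⟨ha, _⟩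
        · exact Or.inl (ha ▸ Reachable.refl _)
        · exact Or.inr (ha ▸ Reachable.refl _)
      refine Or.inr ⟨hauv, ?_⟩
      rcases ih with hq | ⟨_, hx⟩
      · rcases hbuv with rfl | rfl
        · exact Or.inl hq.symm
        · exact Or.inr hq.symm
      · exact hx
    · have hadj : (H.deleteEdges {e}).Adj a b :=
        SimpleGraph.deleteEdges_adj.mpr ⟨h, by simp [hab]⟩
      rcases ih with hq | ⟨hb, hx⟩
      · exact Or.inl (hadj.reachable.trans hq)
      · exact Or.inr ⟨hb.imp (hadj.reachable.trans ·) (hadj.reachable.trans ·), hx⟩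

lemma aux_card_cc_del [Fintype V] (H : SimpleGraph V) (e : Sym2 V) :
    Nat.card (H.deleteEdges {e}).ConnectedComponent ≤ Nat.card H.ConnectedComponent + 1 := by
  classical
  obtain ⟨u, v⟩ := e
  set H' := H.deleteEdges {s(u,v)} with hH'
  have hle : H' ≤ H := SimpleGraph.deleteEdges_le _
  let φ : H'.ConnectedComponent → H.ConnectedComponent :=
    SimpleGraph.ConnectedComponent.map (SimpleGraph.Hom.ofLE hle)
  have key : ∀ c c' : H'.ConnectedComponent, φ c = φ c' →
      c = c' ∨ c = H'.connectedComponentMk v ∨ c' = H'.connectedComponentMk v := by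
    intro c c'
    refine SimpleGraph.ConnectedComponent.ind₂ (fun w x hfeq => ?_) c c'
    have : H.Reachable w x := by
      have := hfeq
      simp only [φ, SimpleGraph.ConnectedComponent.map_mk] at this
      exact SimpleGraph.ConnectedComponent.exact this
    obtain ⟨p⟩ := this
    rcases aux_reach_del rfl p with hr | ⟨hw, hx⟩
    · exact Or.inl (SimpleGraph.ConnectedComponent.sound hr)
    · rcases hw with hw | hw
      · rcases hx with hx | hx
        · exact Or.inl (SimpleGraph.ConnectedComponent.sound (hw.trans hx.symm))
        · exact Or.inr (Or.inr (SimpleGraph.ConnectedComponent.sound hx))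
      · exact Or.inr (Or.inl (SimpleGraph.ConnectedComponent.sound hw))
  haveI : Finite H'.ConnectedComponent := Quot.finite _
  haveI : Finite H.ConnectedComponent := Quot.finite _
  haveI := Fintype.ofFinite H'.ConnectedComponent
  haveI := Fintype.ofFinite H.ConnectedComponent
  rw [Nat.card_eq_fintype_card, Nat.card_eq_fintype_card]
  have hinj : Function.Injective
      (fun c : {c : H'.ConnectedComponent // c ≠ H'.connectedComponentMk v} => φ c.1) := by
    rintro ⟨c, hc⟩ ⟨c', hc'⟩ hcc
    rcases key c c' hcc with h | h | h
    · exact Subtype.ext h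
    · exact absurd h hc
    · exact absurd h hc'
  have h1 : Fintype.card {c : H'.ConnectedComponent // c ≠ H'.connectedComponentMk v}
      ≤ Fintype.card H.ConnectedComponent := Fintype.card_le_of_injective _ hinj
  have h2 := Fintype.card_subtype_compl (p := fun c : H'.ConnectedComponent =>
      c = H'.connectedComponentMk v)
  have h3 := Fintype.card_subtype_eq (H'.connectedComponentMk v)
  simp only [ne_eq] at h1
  omega

lemma aux_card_V_le [Fintype V] (H : SimpleGraph V) :
    Fintype.card V ≤ H.edgeSet.ncard + Nat.card H.ConnectedComponent := by
  classical
  generalize hn : H.edgeSet.ncard = n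
  induction n generalizing H with
  | zero =>
    have hfin : H.edgeSet.Finite := Set.toFinite _
    have : H.edgeSet = ∅ := (Set.ncard_eq_zero hfin).mp hn
    have hbot : H = ⊥ := SimpleGraph.edgeSet_eq_empty.mp this
    subst hbot
    have : Function.Bijective ((⊥ : SimpleGraph V).connectedComponentMk) := by
      constructor
      · intro a b hab
        exact SimpleGraph.reachable_bot.mp (SimpleGraph.ConnectedComponent.exact hab)
      · exact fun c => c.exists_rep
    rw [← Nat.card_eq_of_bijective _ this, Nat.card_eq_fintype_card]
    omega
  | succ n ih =>
    have hfin : H.edgeSet.Finite := Set.toFinite _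
    have hne : H.edgeSet.Nonempty := by
      rw [← Set.ncard_pos hfin]; omega
    obtain ⟨e, he⟩ := hne
    have hdel : (H.deleteEdges {e}).edgeSet.ncard = n := by
      rw [SimpleGraph.edgeSet_deleteEdges]
      have : (H.edgeSet \ {e}).ncard = H.edgeSet.ncard - 1 :=
        Set.ncard_diff_singleton_of_mem he
      omega
    have := ih (H.deleteEdges {e}) hdel
    have := aux_card_cc_del H e
    omega

end AuxStmt3

theorem stmt3 {V C : Type*} [Fintype V] [Fintype C] [DecidableEq C]
    (G : SimpleGraph V) (col : V → C) (f : ℕ)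
    (hE : G.edgeSet.ncard + 1 ≤ Fintype.card V + f)
    (k ℓ : ℕ) (hk : 1 ≤ k) :
    (∃ P : Fin k → Set V,
        (∀ i, (P i).Nonempty) ∧
        (∀ i j, i ≠ j → Disjoint (P i) (P j)) ∧
        (⋃ i, P i) = Set.univ ∧
        (∀ i, (G.induce (P i)).Connected) ∧
        (∀ i, MOV col (P i) ≤ ℓ)) ↔
      (∃ E' : Set (Sym2 V), E' ⊆ G.edgeSet ∧ E'.ncard ≤ f + k - 1 ∧
        Nat.card (G.deleteEdges E').ConnectedComponent = k ∧
        ∀ cc : (G.deleteEdges E').ConnectedComponent, MOV col cc.supp ≤ ℓ) := by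
  classical
  classical
  constructor
  · rintro ⟨P, hne, hdisj, hunion, hconn, hfair⟩
    have hex : ∀ v, ∃ i, v ∈ P i := fun v =>
      Set.mem_iUnion.mp (hunion ▸ Set.mem_univ v)
    choose part hpart using hex
    have huniq : ∀ {v : V} {i : Fin k}, v ∈ P i → part v = i := by
      intro v i hv
      by_contra h
      exact Set.disjoint_left.mp (hdisj _ _ h) (hpart v) hv
    set E' : Set (Sym2 V) := {e | e ∈ G.edgeSet ∧ ¬ (Sym2.map part e).IsDiag} with hE'
    set H := G.deleteEdges E' with hH
    have hHadj : ∀ {x y : V}, H.Adj x y ↔ G.Adj x y ∧ part x = part y := by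
      intro x y
      rw [hH, SimpleGraph.deleteEdges_adj]
      simp only [hE', Set.mem_setOf_eq, SimpleGraph.mem_edgeSet, Sym2.map_pair_eq,
        Sym2.mk_isDiag_iff]
      tauto
    have hpp : ∀ {a b : V}, H.Reachable a b → part a = part b := by
      intro a b ⟨p⟩
      induction p with
      | nil => rfl
      | cons h _ ih => exact (hHadj.mp h).2.trans ih
    have hreach : ∀ (i : Fin k) (v : V), v ∈ P i → ∀ w ∈ P i, H.Reachable v w := by
      intro i v hv w hw
      have hr := (hconn i).preconnected ⟨v, hv⟩ ⟨w, hw⟩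
      exact hr.map
        ({ toFun := Subtype.val,
           map_rel' := fun {a b} ha =>
             hHadj.mpr ⟨ha, by rw [huniq a.2, huniq b.2]⟩ } : G.induce (P i) →g H)
    have hsupp : ∀ v : V, (H.connectedComponentMk v).supp = P (part v) := by
      intro v
      ext w
      rw [SimpleGraph.ConnectedComponent.mem_supp_iff]
      constructor
      · intro h
        have hr : H.Reachable w v := SimpleGraph.ConnectedComponent.exact h
        rw [← hpp hr]
        exact hpart w
      · intro hw
        exact SimpleGraph.ConnectedComponent.sound (hreach _ w hw v (hpart v))
    choose rep hrep using hne
    have hbij : Function.Bijective (fun i => H.connectedComponentMk (rep i)) := by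
      constructor
      · intro i j hij
        have := hpp (SimpleGraph.ConnectedComponent.exact hij)
        rw [huniq (hrep i), huniq (hrep j)] at this
        exact this
      · intro c
        obtain ⟨w, rfl⟩ := c.exists_rep
        refine ⟨part w, ?_⟩
        exact SimpleGraph.ConnectedComponent.sound (hreach _ _ (hrep (part w)) w (hpart w))
    refine ⟨E', fun e he => he.1, ?_, ?_, ?_⟩
    · have hEfin : G.edgeSet.Finite := Set.toFinite _
      have hsub : E' ⊆ G.edgeSet := fun e he => he.1
      have hb : E'.ncard ≤ G.edgeSet.ncard := Set.ncard_le_ncard hsub hEfin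
      have hdiff : (G.edgeSet \ E').ncard = G.edgeSet.ncard - E'.ncard :=
        Set.ncard_diff hsub (hEfin.subset hsub)
      have hmain := aux_card_V_le H
      rw [hH, SimpleGraph.edgeSet_deleteEdges, hdiff] at hmain
      have hkcard : Nat.card H.ConnectedComponent = k := by
        rw [← Nat.card_eq_of_bijective _ hbij, Nat.card_eq_fintype_card, Fintype.card_fin]
      rw [hkcard] at hmain
      omega
    · rw [← Nat.card_eq_of_bijective _ hbij, Nat.card_eq_fintype_card, Fintype.card_fin]
    · intro cc
      obtain ⟨w, rfl⟩ := cc.exists_rep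
      have : (H.connectedComponentMk w).supp = P (part w) := hsupp w
      rw [show (Quot.mk H.Reachable w) = H.connectedComponentMk w from rfl, this]
      exact hfair _
  · rintro ⟨E', hsub, hcard, hk', hfair⟩
    set H := G.deleteEdges E' with hH
    haveI : Finite H.ConnectedComponent := Quot.finite _
    haveI := Fintype.ofFinite H.ConnectedComponent
    have hc : Fintype.card H.ConnectedComponent = k := by
      rw [← Nat.card_eq_fintype_card]; exact hk'
    let e := Fintype.equivFinOfCardEq hc
    refine ⟨fun i => (e.symm i).supp, ?_, ?_, ?_, ?_, fun i => hfair _⟩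
    · intro i
      obtain ⟨v, hv⟩ := (e.symm i).exists_rep
      exact ⟨v, by rw [SimpleGraph.ConnectedComponent.mem_supp_iff]; exact hv⟩
    · intro i j hij
      exact SimpleGraph.pairwise_disjoint_supp_connectedComponent H (e.symm.injective.ne hij)
    · rw [← SimpleGraph.iUnion_connectedComponentSupp H]
      exact e.symm.surjective.iUnion_comp _
    · intro i
      have h1 := aux_connected_induce_supp H (e.symm i)
      have hle : H.induce (e.symm i).supp ≤ G.induce (e.symm i).supp :=
        fun {a b} hab => SimpleGraph.deleteEdges_le E' hab
      exact SimpleGraph.Connected.mono hle h1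
end

section
/- Let G = (V, E) be a finite simple graph and let v₁, …, v_l (l ≥ 2, vertices pairwise distinct, v_i adjacent to v_{i+1} for all i) be a path in G such that every inner vertex v₂, …, v_{l−1} has degree exactly 2 in G. Let W ⊆ V induce a connected subgraph of G with v₁ ∈ W and v_l ∉ W. Then there exists j ∈ {1, …, l−1} such that W ∩ {v₁, …, v_l} = {v₁, …, v_j}. -/
/-!
Let `j` be the first index with `v j ∉ W`. An inner vertex of the path is adjacent only to its
two path neighbours, and `v j`, `v (l - 1)` lie outside `W`, so no edge of `G[W]` leaves the
vertices `v i` with `i > j`. As `G[W]` is connected and contains `v 0`, it meets none of them.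
-/

namespace SimpleGraph

variable {V : Type*} {G : SimpleGraph V}

theorem eq_or_eq_of_degree_eq_two {x a b u : V} [Fintype (G.neighborSet x)]
    (hx : G.degree x = 2) (ha : G.Adj x a) (hb : G.Adj x b) (hab : a ≠ b) (hu : G.Adj x u) :
    u = a ∨ u = b := by
  classical
  have hsub : ({a, b} : Finset V) ⊆ G.neighborFinset x := by
    simp [Finset.insert_subset_iff, ha, hb]
  have heq : ({a, b} : Finset V) = G.neighborFinset x :=
    Finset.eq_of_subset_of_card_le hsub (by rw [card_neighborFinset_eq_degree, hx,
      Finset.card_pair hab])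
  simpa [← heq] using (mem_neighborFinset G x u).2 hu

theorem Connected.disjoint_of_induce_of_adj_closed {W T : Set V} (hconn : (G.induce W).Connected)
    (hclosed : ∀ x ∈ W ∩ T, ∀ y ∈ W, G.Adj x y → y ∈ T) {w : V} (hw : w ∈ W) (hwT : w ∉ T) :
    Disjoint W T := by
  refine Set.disjoint_left.2 fun x hxW hxT => ?_
  obtain ⟨p⟩ := hconn.preconnected ⟨x, hxW⟩ ⟨w, hw⟩
  obtain ⟨d, -, hd, hd'⟩ := p.exists_boundary_dart {z | (z : V) ∈ T} hxT hwT
  exact hd' (hclosed _ ⟨d.fst.2, hd⟩ _ d.snd.2 d.adj)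

end SimpleGraph

open SimpleGraph

section PathWithInnerDegreeTwo

variable {V : Type*} [Fintype V] {G : SimpleGraph V} [DecidableRel G.Adj] {l : ℕ} {v : Fin l → V}

theorem exists_pred_or_succ_eq_of_adj (hinj : Function.Injective v)
    (hpath : ∀ (i : ℕ) (h : i + 1 < l), G.Adj (v ⟨i, Nat.lt_of_succ_lt h⟩) (v ⟨i + 1, h⟩))
    (hdeg : ∀ (i : ℕ) (h : i < l), 0 < i → i + 1 < l → G.degree (v ⟨i, h⟩) = 2)
    {i : Fin l} (hi₀ : 0 < (i : ℕ)) (hi : (i : ℕ) + 1 < l) {u : V} (hu : G.Adj (v i) u) :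
    ∃ k : Fin l, ((k : ℕ) + 1 = i ∨ (k : ℕ) = i + 1) ∧ u = v k := by
  obtain ⟨i, hil⟩ := i
  have hprev : G.Adj (v ⟨i, hil⟩) (v ⟨i - 1, by omega⟩) := by
    have := hpath (i - 1) (by omega)
    simp only [Nat.sub_add_cancel hi₀] at this
    exact this.symm
  have hne : v ⟨i - 1, by omega⟩ ≠ v ⟨i + 1, hi⟩ := fun h => by
    have := congrArg Fin.val (hinj h); simp only at this; omega
  rcases eq_or_eq_of_degree_eq_two (hdeg i hil hi₀ hi) hprev (hpath i hi) hne hu with rfl | rfl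
  · exact ⟨_, .inl (Nat.sub_add_cancel hi₀), rfl⟩
  · exact ⟨_, .inr rfl, rfl⟩

end PathWithInnerDegreeTwo

theorem stmt8 {V : Type*} [Fintype V]
    (G : SimpleGraph V) [DecidableRel G.Adj]
    (l : ℕ) (hl : 2 ≤ l) (v : Fin l → V)
    (hinj : Function.Injective v)
    (hpath : ∀ (i : ℕ) (h : i + 1 < l), G.Adj (v ⟨i, by omega⟩) (v ⟨i + 1, h⟩))
    (hdeg : ∀ (i : ℕ) (h : i < l), 0 < i → i + 1 < l → G.degree (v ⟨i, h⟩) = 2)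
    (W : Set V) (hconn : (G.induce W).Connected)
    (h0 : v ⟨0, by omega⟩ ∈ W) (hlast : v ⟨l - 1, by omega⟩ ∉ W) :
    ∃ j : ℕ, 1 ≤ j ∧ j ≤ l - 1 ∧
      W ∩ Set.range v = v '' {i : Fin l | (i : ℕ) < j} := by
  classical
  have hex : ∃ j, ∃ h : j < l, v ⟨j, h⟩ ∉ W := ⟨l - 1, by omega, hlast⟩
  set j := Nat.find hex
  obtain ⟨hjl, hjW⟩ : ∃ h : j < l, v ⟨j, h⟩ ∉ W := Nat.find_spec hex
  have hj₀ : 1 ≤ j := Nat.one_le_iff_ne_zero.2 fun h => hjW (by simpa [h] using h0)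
  have hbefore : ∀ i : Fin l, (i : ℕ) < j → v i ∈ W := fun i hi => by
    by_contra h; exact Nat.find_min hex hi ⟨i.2, h⟩
  have hafter : Disjoint W (v '' {i | j < (i : ℕ)}) := by
    refine hconn.disjoint_of_induce_of_adj_closed ?_ h0 ?_
    · rintro _ ⟨hxW, i, hji : j < (i : ℕ), rfl⟩ y hyW hy
      have hi : (i : ℕ) + 1 < l := by
        by_contra h
        exact hlast (by convert hxW using 3; omega)
      obtain ⟨k, hk, rfl⟩ := exists_pred_or_succ_eq_of_adj hinj hpath hdeg (by omega) hi hy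
      refine ⟨k, show j < (k : ℕ) from ?_, rfl⟩
      rcases hk with hk | hk
      · by_contra h
        exact hjW (by convert hyW using 3; omega)
      · omega
    · rintro ⟨i, hi, h⟩
      have := congrArg Fin.val (hinj h); simp only [Set.mem_ofPred_eq] at hi this; omega
  refine ⟨j, hj₀, by omega, ?_⟩
  ext x
  constructor
  · rintro ⟨hxW, i, rfl⟩
    refine ⟨i, ?_, rfl⟩
    by_contra h
    rcases (not_lt.1 (show ¬(i : ℕ) < j from h)).lt_or_eq with h | h
    · exact Set.disjoint_left.1 hafter hxW ⟨i, h, rfl⟩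
    · exact hjW (by convert hxW using 3)
  · rintro ⟨i, hi, rfl⟩
    exact ⟨hbefore i hi, i, rfl⟩
end

section
/- Let G be a star with center vertex v on finite vertex set V in which all vertices have the same color, let X ⊆ V with v ∈ X and Y := V \ X, and let k ≥ 1 and ℓ ≥ 0. Then there exists a partition of V into k nonempty ℓ-fair parts, each inducing a connected subgraph of G and with all vertices of X contained in a single part, if and only if |Y| ≥ k − 1 and |V| − (k − 1) ≤ ℓ. -/
open Set Function

section MarginOfVictory

variable {V C : Type*} (col : V → C)

lemma cv_of_forall_col_eq [DecidableEq C] {W : Set V} {c₀ : C} (hW : ∀ x ∈ W, col x = c₀)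
    (c : C) : cv col W c = if c = c₀ then W.ncard else 0 := by
  unfold cv
  split_ifs with hc
  · rw [inter_eq_left.2 fun x hx => hc ▸ hW x hx]
  · rw [eq_empty_of_forall_notMem fun x (hx : x ∈ W ∩ col ⁻¹' {c}) =>
      hc (hx.2.symm.trans (hW x hx.1)), ncard_empty]

theorem MOV_eq_ncard_of_forall_col_eq [Fintype C] [DecidableEq C] {W : Set V} {c₀ : C}
    (hW : ∀ x ∈ W, col x = c₀) : MOV col W = W.ncard := by
  have hcv := cv_of_forall_col_eq col hW
  unfold MOV
  split_ifs
  · rfl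
  · have hmax : (Finset.univ.sup fun c => cv col W c) = W.ncard := by
      refine le_antisymm (Finset.sup_le fun c _ => ?_) ?_
      · rw [hcv]; split_ifs <;> simp
      · simpa [hcv] using Finset.le_sup (f := fun c => cv col W c) (Finset.mem_univ c₀)
    have hsecond : ∀ h, Finset.univ.inf' h
        (fun c => (Finset.univ.erase c).sup fun c' => cv col W c') = 0 := fun _ =>
      Nat.eq_zero_of_le_zero <| (Finset.inf'_le _ (Finset.mem_univ c₀)).trans <|
        Finset.sup_le fun c hc => by simp [hcv, Finset.ne_of_mem_erase hc]
    rw [hmax, hsecond, Nat.sub_zero]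

end MarginOfVictory

theorem Set.sum_ncard_eq_natCard_of_iUnion_eq_univ {ι α : Type*} [Fintype ι] [Finite α]
    {P : ι → Set α} (hdisj : Pairwise (Disjoint on P)) (hcover : ⋃ i, P i = univ) :
    ∑ i, (P i).ncard = Nat.card α := by
  rw [← finsum_eq_sum_of_fintype, ← ncard_iUnion_of_finite (fun _ => toFinite _) hdisj, hcover,
    ncard_univ]

namespace SimpleGraph

variable {ι V : Type*} {G : SimpleGraph V} {S : Set V} {v : V}

lemma induce_connected_of_forall_adj (hv : v ∈ S) (hadj : ∀ u ∈ S, u ≠ v → G.Adj v u) :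
    (G.induce S).Connected := by
  refine (connected_iff_exists_forall_reachable _).2 ⟨⟨v, hv⟩, fun u => ?_⟩
  by_cases hu : (u : V) = v
  · exact (Subtype.ext hu : u = ⟨v, hv⟩) ▸ Reachable.refl _
  · exact Adj.reachable (hadj u u.2 hu)

lemma induce_singleton_connected (y : V) : (G.induce {y}).Connected :=
  Connected.of_subsingleton

lemma exists_eq_singleton_of_induce_connected (hcenter : ∀ a b, G.Adj a b → a = v ∨ b = v)
    (hv : v ∉ S) (hS : (G.induce S).Connected) : ∃ y, S = {y} := by
  have hbot : G.induce S = ⊥ := by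
    ext a b
    simp only [comap_adj, Embedding.coe_subtype, bot_adj, iff_false]
    intro hab
    rcases hcenter _ _ hab with h | h
    · exact hv (h ▸ a.2)
    · exact hv (h ▸ b.2)
  obtain ⟨hsub, ⟨y⟩⟩ := connected_bot_iff.1 (hbot ▸ hS)
  exact ⟨y, (subsingleton_coe S).1 hsub |>.eq_singleton_of_mem y.2⟩

theorem ncard_add_card_sub_one_eq_of_forall_adj_incident [Fintype ι] [Finite V] {P : ι → Set V}
    (hcenter : ∀ a b, G.Adj a b → a = v ∨ b = v) (hdisj : Pairwise (Disjoint on P))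
    (hcover : ⋃ i, P i = univ) (hconn : ∀ i, (G.induce (P i)).Connected) {i₀ : ι}
    (hv : v ∈ P i₀) : (P i₀).ncard + (Fintype.card ι - 1) = Nat.card V := by
  classical
  have hsingle : ∀ i ∈ ({i₀}ᶜ : Finset ι), (P i).ncard = 1 := fun i hi =>
    have hi : i ≠ i₀ := by simpa using hi
    ncard_eq_one.2 <| exists_eq_singleton_of_induce_connected hcenter
      (fun hvi => Set.disjoint_left.1 (hdisj hi) hvi hv) (hconn i)
  rw [← sum_ncard_eq_natCard_of_iUnion_eq_univ hdisj hcover, Fintype.sum_eq_add_sum_compl i₀,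
    Finset.sum_congr rfl hsingle, Finset.sum_const, smul_eq_mul, mul_one, Finset.card_compl,
    Finset.card_singleton]

end SimpleGraph

section PartitionOfRange

variable {α : Type*} {m : ℕ} (g : Fin m → α)

def partitionOfRange : Fin (m + 1) → Set α :=
  Fin.cons (range g)ᶜ fun j => {g j}

@[simp] lemma partitionOfRange_zero : partitionOfRange g 0 = (range g)ᶜ := rfl

@[simp] lemma partitionOfRange_succ (j : Fin m) : partitionOfRange g j.succ = {g j} := rfl

lemma pairwise_disjoint_partitionOfRange (hg : Injective g) :
    Pairwise (Disjoint on partitionOfRange g) := by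
  intro i j hij
  induction i using Fin.cases <;> induction j using Fin.cases
  · exact absurd rfl hij
  · exact disjoint_singleton_right.2 fun h => h (mem_range_self _)
  · exact disjoint_singleton_left.2 fun h => h (mem_range_self _)
  · exact disjoint_singleton.2 fun h => hij (congrArg _ (hg h))

lemma iUnion_partitionOfRange : ⋃ i, partitionOfRange g i = univ := by
  refine eq_univ_of_forall fun x => mem_iUnion.2 ?_
  by_cases hx : x ∈ range g
  · obtain ⟨j, rfl⟩ := hx
    exact ⟨j.succ, rfl⟩
  · exact ⟨0, hx⟩

end PartitionOfRange

theorem stmt11 {V C : Type*} [Fintype V] [Fintype C] [DecidableEq C]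
    (G : SimpleGraph V) (v : V)
    (hstar : ∀ a b : V, G.Adj a b ↔ (a ≠ b ∧ (a = v ∨ b = v)))
    (col : V → C) (hcol : ∀ x y : V, col x = col y)
    (X : Set V) (hvX : v ∈ X)
    (k ℓ : ℕ) (hk : 1 ≤ k) :
    (∃ P : Fin k → Set V,
        (∀ i, (P i).Nonempty) ∧
        (∀ i j, i ≠ j → Disjoint (P i) (P j)) ∧
        (⋃ i, P i) = Set.univ ∧
        (∀ i, (G.induce (P i)).Connected) ∧
        (∀ i, MOV col (P i) ≤ ℓ) ∧
        (∃ i, X ⊆ P i)) ↔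
      (k - 1 ≤ Xᶜ.ncard ∧ Fintype.card V - (k - 1) ≤ ℓ) := by
  have hMOV (W : Set V) : MOV col W = W.ncard :=
    MOV_eq_ncard_of_forall_col_eq col fun x _ => hcol x v
  rw [← Nat.card_eq_fintype_card]
  constructor
  · rintro ⟨P, -, hdisj, hcover, hconn, hfair, i₀, hX⟩
    have hsum := SimpleGraph.ncard_add_card_sub_one_eq_of_forall_adj_incident
      (fun a b hab => ((hstar a b).1 hab).2) hdisj hcover hconn (hX hvX)
    have hY : (P i₀)ᶜ.ncard ≤ Xᶜ.ncard := ncard_le_ncard (compl_subset_compl.2 hX)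
    rw [ncard_compl] at hY
    have := hMOV (P i₀) ▸ hfair i₀
    rw [Fintype.card_fin] at hsum
    omega
  · rintro ⟨hY, hℓ⟩
    obtain ⟨m, rfl⟩ : ∃ m, k = m + 1 := ⟨k - 1, by omega⟩
    rw [add_tsub_cancel_right] at hY hℓ
    have hXcard : X.ncard + Xᶜ.ncard = Nat.card V := ncard_add_ncard_compl X
    obtain ⟨g, hXg⟩ := Fin.Embedding.exists_embedding_disjoint_range_of_add_le_Nat_card
      (s := X) (n := m) (by omega)
    have hv : v ∈ (range g)ᶜ := disjoint_left.1 hXg hvX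
    have hcard : (range g)ᶜ.ncard = Nat.card V - m := by
      rw [ncard_compl, ncard_range_of_injective g.injective, Nat.card_fin]
    have hX : 1 ≤ X.ncard := (ncard_pos).2 ⟨v, hvX⟩
    refine ⟨partitionOfRange g, Fin.cases ⟨v, hv⟩ fun j => singleton_nonempty (g j),
      pairwise_disjoint_partitionOfRange g g.injective, iUnion_partitionOfRange g,
      Fin.cases ?center fun j => SimpleGraph.induce_singleton_connected (g j), ?fair, 0,
      hXg.subset_compl_right⟩
    case center =>
      exact SimpleGraph.induce_connected_of_forall_adj hv fun u _ hu =>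
        (hstar v u).2 ⟨hu.symm, Or.inl rfl⟩
    case fair =>
      refine Fin.cases ?_ fun j => ?_
      · rw [hMOV, partitionOfRange_zero, hcard]; exact hℓ
      · rw [hMOV, partitionOfRange_succ, ncard_singleton]; omega
end

section
/- Let G be a star with center vertex v on finite vertex set V with coloring col : V → C, let X ⊆ V with v ∈ X, and let k ≥ 1. Then there exists a partition of V into k nonempty 0-fair parts, each inducing a connected subgraph of G and with all vertices of X contained in a single part, if and only if k = 1 and MOV(V) = 0. -/
lemma mov_singleton_pos {V C : Type*} [Fintype C] [DecidableEq C] (col : V → C) (u : V) :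
    0 < MOV col ({u} : Set V) := by
  unfold MOV
  split_ifs with h
  · simp
  · have hcv : cv col ({u} : Set V) (col u) = 1 := by
      have : ({u} : Set V) ∩ col ⁻¹' {col u} = {u} :=
        Set.inter_eq_self_of_subset_left (by simp)
      simp [cv, this]
    have hsup : 1 ≤ Finset.univ.sup fun c => cv col ({u} : Set V) c := by
      refine le_trans ?_ (Finset.le_sup (Finset.mem_univ (col u)))
      omega
    have hinf : (Finset.univ.inf'
        (Finset.univ_nonempty_iff.mpr (Fintype.card_pos_iff.mp (by omega)))
        (fun c => (Finset.univ.erase c).sup fun c' => cv col ({u} : Set V) c')) = 0 := by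
      refine Nat.le_antisymm ?_ (Nat.zero_le _)
      refine le_trans (Finset.inf'_le _ (Finset.mem_univ (col u))) ?_
      refine Finset.sup_le fun c' hc' => ?_
      have hne : c' ≠ col u := Finset.ne_of_mem_erase hc'
      have : ({u} : Set V) ∩ col ⁻¹' {c'} = ∅ := by
        ext x; simp; intro hx; subst hx; exact fun h => hne h.symm
      simp [cv, this]
    omega

lemma no_edge_reachable_eq {W : Type*} {H : SimpleGraph W}
    (hadj : ∀ a b, ¬ H.Adj a b) {a b : W} (hr : H.Reachable a b) : a = b := by
  obtain ⟨w⟩ := hr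
  cases w with
  | nil => rfl
  | cons h p => exact absurd h (hadj _ _)

theorem stmt12 {V C : Type*} [Fintype V] [Fintype C] [DecidableEq C]
    (G : SimpleGraph V) (v : V)
    (hstar : ∀ a b : V, G.Adj a b ↔ (a ≠ b ∧ (a = v ∨ b = v)))
    (col : V → C)
    (X : Set V) (hvX : v ∈ X)
    (k : ℕ) (hk : 1 ≤ k) :
    (∃ P : Fin k → Set V,
        (∀ i, (P i).Nonempty) ∧
        (∀ i j, i ≠ j → Disjoint (P i) (P j)) ∧
        (⋃ i, P i) = Set.univ ∧
        (∀ i, (G.induce (P i)).Connected) ∧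
        (∀ i, MOV col (P i) ≤ 0) ∧
        (∃ i, X ⊆ P i)) ↔
      (k = 1 ∧ MOV col (Set.univ : Set V) = 0) := by
  constructor
  · rintro ⟨P, hne, hdis, huniv, hconn, hmov, -⟩
    obtain ⟨i0, hi0⟩ : ∃ i, v ∈ P i := by
      have : v ∈ ⋃ i, P i := huniv ▸ Set.mem_univ v
      simpa using this
    have hk1 : k = 1 := by
      by_contra hne1
      have hk2 : 1 < Fintype.card (Fin k) := by simp; omega
      obtain ⟨j, hj⟩ := Fintype.exists_ne_of_one_lt_card hk2 i0
      have hvj : v ∉ P j := fun hv => Set.disjoint_left.mp (hdis j i0 hj) hv hi0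
      obtain ⟨u, hu⟩ := hne j
      have hPj : P j = {u} := by
        ext a
        simp only [Set.mem_singleton_iff]
        constructor
        · intro ha
          have hr := (hconn j).preconnected ⟨a, ha⟩ ⟨u, hu⟩
          have := no_edge_reachable_eq (H := G.induce (P j)) (fun x y hxy => by
            have hx := x.2; have hy := y.2
            have : G.Adj x.val y.val := hxy
            rcases (hstar _ _).mp this with ⟨-, h1 | h2⟩
            · exact hvj (h1 ▸ hx)
            · exact hvj (h2 ▸ hy)) hr
          exact congrArg Subtype.val this
        · rintro rfl; exact hu
      have := hmov j
      rw [hPj] at this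
      exact absurd this (Nat.not_le.mpr (mov_singleton_pos col u))
    subst hk1
    have hP : P i0 = Set.univ := by
      rw [← huniv]
      refine le_antisymm (Set.subset_iUnion P i0) ?_
      refine Set.iUnion_subset fun i => ?_
      rw [Subsingleton.elim i i0]
    refine ⟨rfl, ?_⟩
    have := hmov i0
    rw [hP] at this
    omega
  · rintro ⟨hk1, hmov⟩
    subst hk1
    have hconn : (G.induce (Set.univ : Set V)).Connected := by
      rw [SimpleGraph.connected_iff]
      refine ⟨fun a b => ?_, ⟨⟨v, trivial⟩⟩⟩
      have key : ∀ x : (Set.univ : Set V), (G.induce Set.univ).Reachable x ⟨v, trivial⟩ := by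
        intro x
        by_cases hx : (x : V) = v
        · have : x = ⟨v, trivial⟩ := Subtype.ext hx
          rw [this]
        · refine SimpleGraph.Adj.reachable ?_
          show G.Adj x.val v
          exact (hstar _ _).mpr ⟨hx, Or.inr rfl⟩
      exact (key a).trans (key b).symm
    exact ⟨fun _ => Set.univ, fun i => ⟨v, trivial⟩,
      fun i j hij => absurd (Subsingleton.elim i j) hij,
      Set.iUnion_const _, fun i => hconn, fun i => hmov.le, ⟨0, Set.subset_univ X⟩⟩
end

section
/- Let V be a finite set with coloring col : V → C, let ℓ ≥ 1, and let S' ⊆ S ⊆ V be such that both S and S' are ℓ-fair. Then for every integer m with |S'| ≤ m ≤ |S| there exists a set T with S' ⊆ T ⊆ S, |T| = m, and T ℓ-fair. -/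
/-!
Grow `S'` inside `S` one vertex at a time. Call a color `c` saturated in a fair set `T` if
its count exceeds the largest count among the other colors by exactly `ℓ`; adding a vertex
keeps `T` fair unless its color is saturated. For `ℓ ≥ 1` at most one color `c₀` is saturated.
If every vertex of `S \ T` had color `c₀`, then `S` and `T` would agree on all other colors
while `S` has strictly more vertices of color `c₀`, so `S` would not be `ℓ`-fair.
-/

open Finset

section ColorCount

variable {V C : Type*} (col : V → C)

lemma cv_insert_s13 [Finite V] [DecidableEq C] {W : Set V} {v : V} (hv : v ∉ W) (c : C) :
    cv col (insert v W) c = cv col W c + if col v = c then 1 else 0 := by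
  unfold cv
  split_ifs with h
  · rw [Set.insert_inter_of_mem (by simp [h]), Set.ncard_insert_of_notMem (by simp [hv])]
  · rw [Set.insert_inter_of_notMem (by simp [h]), add_zero]

lemma cv_mono [Finite V] {W W' : Set V} (h : W ⊆ W') (c : C) : cv col W c ≤ cv col W' c :=
  Set.ncard_le_ncard (Set.inter_subset_inter_left _ h)

lemma cv_eq_of_forall_mem_diff_col_ne {W W' : Set V} (h : W ⊆ W') {c : C}
    (hc : ∀ v ∈ W', v ∉ W → col v ≠ c) : cv col W' c = cv col W c := by
  unfold cv
  congr 1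
  ext x
  simp only [Set.mem_inter_iff, Set.mem_preimage, Set.mem_singleton_iff]
  refine ⟨fun ⟨hx, hxc⟩ => ⟨?_, hxc⟩, fun ⟨hx, hxc⟩ => ⟨h hx, hxc⟩⟩
  by_contra hxW
  exact hc x hx hxW hxc

end ColorCount

section Fairness

variable {V C : Type*} [Fintype C] [DecidableEq C] (col : V → C)

noncomputable def rivalCount (W : Set V) (c : C) : ℕ :=
  (univ.erase c).sup (cv col W)

lemma cv_le_rivalCount (W : Set V) {c c' : C} (h : c' ≠ c) :
    cv col W c' ≤ rivalCount col W c :=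
  le_sup (mem_erase.mpr ⟨h, mem_univ _⟩)

lemma rivalCount_mono [Finite V] {W W' : Set V} (h : W ⊆ W') (c : C) :
    rivalCount col W c ≤ rivalCount col W' c :=
  sup_mono_fun fun c' _ => cv_mono col h c'

lemma MOV_of_card_le_one (hC : Fintype.card C ≤ 1) (W : Set V) : MOV col W = W.ncard := by
  rw [MOV, dif_pos hC]

lemma MOV_le_iff (hC : 1 < Fintype.card C) (W : Set V) (ℓ : ℕ) :
    MOV col W ≤ ℓ ↔ ∀ c, cv col W c ≤ ℓ + rivalCount col W c := by
  have hne : (univ : Finset C).Nonempty :=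
    univ_nonempty_iff.mpr (Fintype.card_pos_iff.mp (by omega))
  rw [MOV, dif_neg (by omega), tsub_le_iff_right]
  change univ.sup (cv col W) ≤ ℓ + univ.inf' hne (rivalCount col W) ↔ _
  constructor
  · intro h c
    calc cv col W c ≤ univ.sup (cv col W) := le_sup (mem_univ c)
      _ ≤ ℓ + univ.inf' hne (rivalCount col W) := h
      _ ≤ ℓ + rivalCount col W c := by gcongr; exact inf'_le _ (mem_univ c)
  · intro h
    obtain ⟨c, -, hc⟩ := exists_mem_eq_inf' hne (rivalCount col W)
    obtain ⟨c₀, -, hc₀⟩ := exists_mem_eq_sup univ hne (cv col W)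
    rw [hc, hc₀]
    by_cases hcc : c₀ = c
    · exact hcc ▸ h c₀
    · exact (cv_le_rivalCount col W hcc).trans (Nat.le_add_left _ _)

lemma eq_of_saturated {ℓ : ℕ} (hℓ : 1 ≤ ℓ) {W : Set V} {c c' : C}
    (hc : cv col W c = ℓ + rivalCount col W c) (hc' : cv col W c' = ℓ + rivalCount col W c') :
    c = c' := by
  by_contra hne
  have h₁ := cv_le_rivalCount col W hne
  have h₂ := cv_le_rivalCount col W (Ne.symm hne)
  omega

lemma MOV_insert_le [Finite V] (hC : 1 < Fintype.card C) {ℓ : ℕ} {W : Set V}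
    (hW : MOV col W ≤ ℓ) {v : V} (hv : v ∉ W)
    (hlt : cv col W (col v) < ℓ + rivalCount col W (col v)) :
    MOV col (insert v W) ≤ ℓ := by
  rw [MOV_le_iff col hC] at hW ⊢
  intro c
  have hrival := rivalCount_mono col (Set.subset_insert v W) c
  rw [cv_insert_s13 col hv c]
  split_ifs with h
  · subst h
    omega
  · have := hW c
    omega

lemma exists_mem_diff_cv_lt_rivalCount [Finite V] (hC : 1 < Fintype.card C) {ℓ : ℕ}
    (hℓ : 1 ≤ ℓ) {T S : Set V} (hT : MOV col T ≤ ℓ) (hS : MOV col S ≤ ℓ) (hTS : T ⊂ S) :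
    ∃ v ∈ S, v ∉ T ∧ cv col T (col v) < ℓ + rivalCount col T (col v) := by
  rw [MOV_le_iff col hC] at hT hS
  obtain ⟨v₀, hv₀S, hv₀T⟩ := Set.exists_of_ssubset hTS
  by_contra! hsat
  have hsat' : ∀ v ∈ S, v ∉ T → cv col T (col v) = ℓ + rivalCount col T (col v) :=
    fun v hvS hvT => le_antisymm (hT _) (hsat v hvS hvT)
  have hcol : ∀ v ∈ S, v ∉ T → col v = col v₀ := fun v hvS hvT =>
    eq_of_saturated col hℓ (hsat' v hvS hvT) (hsat' v₀ hv₀S hv₀T)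
  have hrival : rivalCount col S (col v₀) = rivalCount col T (col v₀) :=
    sup_congr rfl fun c hc => cv_eq_of_forall_mem_diff_col_ne col hTS.subset
      fun v hvS hvT hvc => (mem_erase.mp hc).1 (hvc ▸ hcol v hvS hvT)
  have hgrow : cv col T (col v₀) + 1 ≤ cv col S (col v₀) := by
    simpa [cv_insert_s13 col hv₀T] using
      cv_mono col (Set.insert_subset hv₀S hTS.subset) (col v₀)
  have := hS (col v₀)
  have := hsat' v₀ hv₀S hv₀T
  omega

lemma exists_insert_MOV_le [Finite V] {ℓ : ℕ} (hℓ : 1 ≤ ℓ) {T S : Set V}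
    (hT : MOV col T ≤ ℓ) (hS : MOV col S ≤ ℓ) (hTS : T ⊂ S) :
    ∃ v ∈ S, v ∉ T ∧ MOV col (insert v T) ≤ ℓ := by
  by_cases hC : Fintype.card C ≤ 1
  · obtain ⟨v, hvS, hvT⟩ := Set.exists_of_ssubset hTS
    refine ⟨v, hvS, hvT, ?_⟩
    rw [MOV_of_card_le_one col hC] at hS ⊢
    exact (Set.ncard_le_ncard (Set.insert_subset hvS hTS.subset)).trans hS
  · obtain ⟨v, hvS, hvT, hlt⟩ := exists_mem_diff_cv_lt_rivalCount col (by omega) hℓ hT hS hTS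
    exact ⟨v, hvS, hvT, MOV_insert_le col (by omega) hT hvT hlt⟩

end Fairness

theorem stmt13 {V C : Type*} [Fintype V] [Fintype C] [DecidableEq C]
    (col : V → C) (ℓ : ℕ) (hℓ : 1 ≤ ℓ)
    (S' S : Set V) (hsub : S' ⊆ S)
    (hS : MOV col S ≤ ℓ) (hS' : MOV col S' ≤ ℓ)
    (m : ℕ) (hm1 : S'.ncard ≤ m) (hm2 : m ≤ S.ncard) :
    ∃ T : Set V, S' ⊆ T ∧ T ⊆ S ∧ T.ncard = m ∧ MOV col T ≤ ℓ := by
  induction m, hm1 using Nat.le_induction with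
  | base => exact ⟨S', subset_rfl, hsub, rfl, hS'⟩
  | succ m _ ih =>
    obtain ⟨T, hS'T, hTS, hTcard, hT⟩ := ih (by omega)
    have hTS' : T ⊂ S := hTS.ssubset_of_ne fun h => by subst h; omega
    obtain ⟨v, hvS, hvT, hvT'⟩ := exists_insert_MOV_le col hℓ hT hS hTS'
    exact ⟨insert v T, hS'T.trans (Set.subset_insert v T), Set.insert_subset hvS hTS,
      by rw [Set.ncard_insert_of_notMem hvT, hTcard], hvT'⟩
end

section
/- Let G = (V, E) be a finite simple graph with |V| = n even and n ≥ 2, let all vertices of G have color c₁, let c₂ ≠ c₁ be another color, and let v, v' ∈ V be distinct. Let G' be the graph obtained from G by adding n new vertices, each of color c₂, where n/2 of them are adjacent only to v and the other n/2 are adjacent only to v'. Then the vertex set of G' admits a partition into 2 nonempty 0-fair parts each inducing a connected subgraph of G' if and only if there exists a partition (V₁, V₂) of V such that G[V₁] and G[V₂] are connected, v ∈ V₁, v' ∈ V₂, and |V₁| = |V₂| = n/2. -/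
lemma reach_map {α β : Type*} {H : SimpleGraph α} {K : SimpleGraph β} (f : α → β)
    (hf : ∀ a b, H.Adj a b → f a = f b ∨ K.Adj (f a) (f b)) {a b : α}
    (h : H.Reachable a b) : K.Reachable (f a) (f b) := by
  obtain ⟨w⟩ := h
  induction w with
  | nil => exact SimpleGraph.Reachable.refl _
  | cons h w ih =>
    rcases hf _ _ h with he | ha
    · rw [he]; exact ih
    · exact (SimpleGraph.Adj.reachable ha).trans ih

lemma conn_proj {V : Type*} {n : ℕ} (G : SimpleGraph V) (G' : SimpleGraph (V ⊕ Fin n))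
    (hG'₁ : ∀ a b : V, G'.Adj (Sum.inl a) (Sum.inl b) ↔ G.Adj a b)
    (hG'₃ : ∀ i j : Fin n, ¬ G'.Adj (Sum.inr i) (Sum.inr j))
    (Q : Set (V ⊕ Fin n)) (w : V) (hw : Sum.inl w ∈ Q)
    (hadj : ∀ (i : Fin n) (a : V), Sum.inr i ∈ Q → Sum.inl a ∈ Q →
      G'.Adj (Sum.inr i) (Sum.inl a) → a = w)
    (hconn : (G'.induce Q).Connected) : (G.induce (Sum.inl ⁻¹' Q)).Connected := by
  have hwV : w ∈ Sum.inl ⁻¹' Q := hw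
  let f : ↥Q → ↥(Sum.inl ⁻¹' Q) := fun x => match x with
    | ⟨Sum.inl a, ha⟩ => ⟨a, ha⟩
    | ⟨Sum.inr _, _⟩ => ⟨w, hwV⟩
  have hf : ∀ a b : ↥Q, (G'.induce Q).Adj a b →
      f a = f b ∨ (G.induce (Sum.inl ⁻¹' Q)).Adj (f a) (f b) := by
    rintro ⟨(a | i), ha⟩ ⟨(b | j), hb⟩ hab
    · right
      simp only [SimpleGraph.comap_adj, Function.Embedding.coe_subtype] at hab ⊢
      exact (hG'₁ a b).mp hab
    · left
      simp only [SimpleGraph.comap_adj, Function.Embedding.coe_subtype] at hab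
      have : a = w := hadj j a hb ha hab.symm
      simp [f, this]
    · left
      simp only [SimpleGraph.comap_adj, Function.Embedding.coe_subtype] at hab
      have : b = w := hadj i b ha hb hab
      simp [f, this]
    · simp only [SimpleGraph.comap_adj, Function.Embedding.coe_subtype] at hab
      exact absurd hab (hG'₃ i j)
  have : Nonempty ↥(Sum.inl ⁻¹' Q) := ⟨⟨w, hwV⟩⟩
  refine ⟨?_⟩
  rintro ⟨a, ha⟩ ⟨b, hb⟩
  exact reach_map f hf (hconn.preconnected ⟨Sum.inl a, ha⟩ ⟨Sum.inl b, hb⟩)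

lemma ncard_lt_k {n k : ℕ} (hk : k ≤ n) : {i : Fin n | (i : ℕ) < k}.ncard = k := by
  have : {i : Fin n | (i : ℕ) < k} =
      (fun j : Fin k => (⟨(j : ℕ), lt_of_lt_of_le j.2 hk⟩ : Fin n)) '' Set.univ := by
    ext i
    simp only [Set.mem_setOf_eq, Set.image_univ, Set.mem_range]
    constructor
    · intro hi; exact ⟨⟨(i : ℕ), hi⟩, by simp⟩
    · rintro ⟨j, rfl⟩; exact j.2
  rw [this, Set.ncard_image_of_injective _ (fun a b h => by
    apply Fin.ext
    simpa [Fin.ext_iff] using h), Set.ncard_univ, Nat.card_eq_fintype_card, Fintype.card_fin]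

lemma ncard_partition {α : Type*} [Fintype α] {S T : Set α} (h : Disjoint S T)
    (hu : S ∪ T = Set.univ) : S.ncard + T.ncard = Fintype.card α := by
  rw [← Set.ncard_union_eq h S.toFinite T.toFinite, hu, Set.ncard_univ, Nat.card_eq_fintype_card]

lemma step_lemma {V : Type*} {n : ℕ} (G' : SimpleGraph (V ⊕ Fin n))
    (hG'₃ : ∀ i j : Fin n, ¬ G'.Adj (Sum.inr i) (Sum.inr j))
    (R : Set (V ⊕ Fin n)) (hc : (G'.induce R).Connected)
    (hA : (Sum.inl ⁻¹' R).Nonempty) (i : Fin n) (hi : Sum.inr i ∈ R) :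
    ∃ b, Sum.inl b ∈ R ∧ G'.Adj (Sum.inr i) (Sum.inl b) := by
  obtain ⟨a, ha⟩ := hA
  obtain ⟨w⟩ := hc.preconnected ⟨Sum.inr i, hi⟩ ⟨Sum.inl a, ha⟩
  cases w with
  | cons h p =>
    rename_i y
    obtain ⟨(b | j), hy⟩ := y
    · refine ⟨b, hy, ?_⟩
      simpa using h
    · exact absurd (by simpa using h) (hG'₃ i j)

lemma forward_core {V : Type*} [Fintype V]
    (G : SimpleGraph V) (n : ℕ) (hn : Fintype.card V = n) (hn2 : 2 ≤ n) (hneven : Even n)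
    (v v' : V) (hvv : v ≠ v')
    (G' : SimpleGraph (V ⊕ Fin n))
    (hG'₁ : ∀ a b : V, G'.Adj (Sum.inl a) (Sum.inl b) ↔ G.Adj a b)
    (hG'₂ : ∀ (i : Fin n) (a : V), G'.Adj (Sum.inr i) (Sum.inl a) ↔
      (((i : ℕ) < n / 2 ∧ a = v) ∨ (n / 2 ≤ (i : ℕ) ∧ a = v')))
    (hG'₃ : ∀ i j : Fin n, ¬ G'.Adj (Sum.inr i) (Sum.inr j))
    (Q Q' : Set (V ⊕ Fin n))
    (hdisj : Disjoint Q Q') (hcov : Q ∪ Q' = Set.univ)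
    (hcQ : (G'.induce Q).Connected) (hcQ' : (G'.induce Q').Connected)
    (fairQ : (Sum.inl ⁻¹' Q).ncard = (Sum.inr ⁻¹' Q : Set (Fin n)).ncard)
    (fairQ' : (Sum.inl ⁻¹' Q').ncard = (Sum.inr ⁻¹' Q' : Set (Fin n)).ncard)
    (hneQ : Q.Nonempty) (hneQ' : Q'.Nonempty)
    (hvQ : Sum.inl v ∈ Q) :
    ∃ V₁ V₂ : Set V, Disjoint V₁ V₂ ∧ V₁ ∪ V₂ = Set.univ ∧
      (G.induce V₁).Connected ∧ (G.induce V₂).Connected ∧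
      v ∈ V₁ ∧ v' ∈ V₂ ∧ V₁.ncard = n / 2 ∧ V₂.ncard = n / 2 := by
  have hAne : (Sum.inl ⁻¹' Q).Nonempty := ⟨v, hvQ⟩
  -- A' nonempty
  have hA'ne : (Sum.inl ⁻¹' Q').Nonempty := by
    obtain ⟨x, hx⟩ := hneQ'
    cases x with
    | inl a => exact ⟨a, hx⟩
    | inr i =>
      have hB : (Sum.inr ⁻¹' Q' : Set (Fin n)).Nonempty := ⟨i, hx⟩
      rw [← Set.ncard_pos (Set.toFinite _), ← fairQ', Set.ncard_pos (Set.toFinite _)] at hB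
      exact hB
  -- B' nonempty
  have hB'ne : (Sum.inr ⁻¹' Q' : Set (Fin n)).Nonempty := by
    rw [← Set.ncard_pos (Set.toFinite _), ← fairQ', Set.ncard_pos (Set.toFinite _)]
    exact hA'ne
  -- v' ∈ Q'
  have hv'Q' : Sum.inl v' ∈ Q' := by
    obtain ⟨i, hi⟩ := hB'ne
    obtain ⟨b, hb, hadj⟩ := step_lemma G' hG'₃ Q' hcQ' hA'ne i hi
    rcases (hG'₂ i b).mp hadj with ⟨_, rfl⟩ | ⟨_, rfl⟩
    · exact absurd hvQ (Set.disjoint_right.mp hdisj hb)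
    · exact hb
  have hv'nQ : Sum.inl v' ∉ Q := Set.disjoint_right.mp hdisj hv'Q'
  have hvnQ' : Sum.inl v ∉ Q' := Set.disjoint_left.mp hdisj hvQ
  -- inr part of Q is low, of Q' is high
  have hBQ : (Sum.inr ⁻¹' Q : Set (Fin n)) ⊆ {i | (i : ℕ) < n / 2} := by
    intro i hi
    obtain ⟨b, hb, hadj⟩ := step_lemma G' hG'₃ Q hcQ hAne i hi
    rcases (hG'₂ i b).mp hadj with ⟨h1, rfl⟩ | ⟨h1, rfl⟩
    · exact h1
    · exact absurd hb hv'nQ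
  have hBQ' : (Sum.inr ⁻¹' Q' : Set (Fin n)) ⊆ {i | (i : ℕ) < n / 2}ᶜ := by
    intro i hi
    obtain ⟨b, hb, hadj⟩ := step_lemma G' hG'₃ Q' hcQ' hA'ne i hi
    rcases (hG'₂ i b).mp hadj with ⟨h1, rfl⟩ | ⟨h1, rfl⟩
    · exact absurd hb hvnQ'
    · simpa using h1
  -- counting
  have hdisjB : Disjoint (Sum.inr ⁻¹' Q : Set (Fin n)) (Sum.inr ⁻¹' Q') :=
    hdisj.preimage _
  have hcovB : (Sum.inr ⁻¹' Q : Set (Fin n)) ∪ Sum.inr ⁻¹' Q' = Set.univ := by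
    rw [← Set.preimage_union, hcov, Set.preimage_univ]
  have hsumB := ncard_partition hdisjB hcovB
  rw [Fintype.card_fin] at hsumB
  have hkn : n / 2 ≤ n := Nat.div_le_self n 2
  have hlow : {i : Fin n | (i : ℕ) < n / 2}.ncard = n / 2 := ncard_lt_k hkn
  have hhigh : ({i : Fin n | (i : ℕ) < n / 2}ᶜ).ncard = n - n / 2 := by
    have := ncard_partition (@disjoint_compl_right (Set (Fin n)) _ {i : Fin n | (i : ℕ) < n / 2})
      (Set.union_compl_self _)
    rw [Fintype.card_fin, hlow] at this
    omega
  have hBQcard : (Sum.inr ⁻¹' Q : Set (Fin n)).ncard ≤ n / 2 := by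
    rw [← hlow]; exact Set.ncard_le_ncard hBQ (Set.toFinite _)
  have hBQ'card : (Sum.inr ⁻¹' Q' : Set (Fin n)).ncard ≤ n - n / 2 := by
    rw [← hhigh]; exact Set.ncard_le_ncard hBQ' (Set.toFinite _)
  obtain ⟨m, hm⟩ := hneven
  have hBQeq : (Sum.inr ⁻¹' Q : Set (Fin n)).ncard = n / 2 := by omega
  have hBQ'eq : (Sum.inr ⁻¹' Q' : Set (Fin n)).ncard = n / 2 := by omega
  -- conclude
  refine ⟨Sum.inl ⁻¹' Q, Sum.inl ⁻¹' Q', hdisj.preimage _, ?_, ?_, ?_, hvQ, hv'Q', ?_, ?_⟩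
  · rw [← Set.preimage_union, hcov, Set.preimage_univ]
  · refine conn_proj G G' hG'₁ hG'₃ Q v hvQ ?_ hcQ
    intro i a hi ha hadj
    rcases (hG'₂ i a).mp hadj with ⟨_, rfl⟩ | ⟨_, rfl⟩
    · rfl
    · exact absurd ha hv'nQ
  · refine conn_proj G G' hG'₁ hG'₃ Q' v' hv'Q' ?_ hcQ'
    intro i a hi ha hadj
    rcases (hG'₂ i a).mp hadj with ⟨h1, rfl⟩ | ⟨_, rfl⟩
    · exact absurd ha hvnQ'
    · rfl
  · rw [fairQ, hBQeq]
  · rw [fairQ', hBQ'eq]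

lemma sup_two {C : Type*} [Fintype C] [DecidableEq C] (f : C → ℕ) (c₁ c₂ : C) (hcc : c₂ ≠ c₁)
    (h0 : ∀ c, c ≠ c₁ → c ≠ c₂ → f c = 0) :
    Finset.univ.sup f = max (f c₁) (f c₂) := by
  apply le_antisymm
  · apply Finset.sup_le
    intro c _
    by_cases h1 : c = c₁
    · subst h1; exact le_max_left _ _
    by_cases h2 : c = c₂
    · subst h2; exact le_max_right _ _
    · rw [h0 c h1 h2]; exact Nat.zero_le _
  · exact max_le (Finset.le_sup (Finset.mem_univ c₁)) (Finset.le_sup (Finset.mem_univ c₂))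

lemma inf_two {C : Type*} [Fintype C] [DecidableEq C] (f : C → ℕ) (c₁ c₂ : C) (hcc : c₂ ≠ c₁)
    (h0 : ∀ c, c ≠ c₁ → c ≠ c₂ → f c = 0) (hne : Finset.univ.Nonempty) :
    Finset.univ.inf' hne (fun c => (Finset.univ.erase c).sup f) = min (f c₁) (f c₂) := by
  apply le_antisymm
  · apply le_min
    · refine le_trans (Finset.inf'_le _ (Finset.mem_univ c₂)) ?_
      apply Finset.sup_le
      intro c hc
      by_cases h1 : c = c₁
      · subst h1; exact le_rfl
      · rw [h0 c h1 (Finset.ne_of_mem_erase hc)]; exact Nat.zero_le _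
    · refine le_trans (Finset.inf'_le _ (Finset.mem_univ c₁)) ?_
      apply Finset.sup_le
      intro c hc
      by_cases h2 : c = c₂
      · subst h2; exact le_rfl
      · rw [h0 c (Finset.ne_of_mem_erase hc) h2]; exact Nat.zero_le _
  · apply Finset.le_inf'
    intro c _
    by_cases h1 : c = c₁
    · subst h1
      exact le_trans (min_le_right _ _)
        (Finset.le_sup (Finset.mem_erase.mpr ⟨hcc, Finset.mem_univ _⟩))
    · exact le_trans (min_le_left _ _)
        (Finset.le_sup (Finset.mem_erase.mpr ⟨Ne.symm h1, Finset.mem_univ _⟩))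

lemma mov_char {V C : Type*} [Fintype V] [Fintype C] [DecidableEq C] {n : ℕ}
    (c₁ c₂ : C) (hcc : c₂ ≠ c₁) (col' : V ⊕ Fin n → C)
    (hcol₁ : ∀ a, col' (Sum.inl a) = c₁) (hcol₂ : ∀ i, col' (Sum.inr i) = c₂)
    (W : Set (V ⊕ Fin n)) :
    MOV col' W ≤ 0 ↔ (Sum.inl ⁻¹' W).ncard = (Sum.inr ⁻¹' W : Set (Fin n)).ncard := by
  have hC : ¬ Fintype.card C ≤ 1 := by
    have : 1 < Fintype.card C := Fintype.one_lt_card_iff_nontrivial.mpr ⟨c₂, c₁, hcc⟩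
    omega
  have h1 : cv col' W c₁ = (Sum.inl ⁻¹' W).ncard := by
    have : W ∩ col' ⁻¹' {c₁} = Sum.inl '' (Sum.inl ⁻¹' W) := by
      ext x
      cases x with
      | inl a => simp [hcol₁]
      | inr i => simp [hcol₂, hcc]
    rw [cv, this, Set.ncard_image_of_injective _ Sum.inl_injective]
  have h2 : cv col' W c₂ = (Sum.inr ⁻¹' W : Set (Fin n)).ncard := by
    have : W ∩ col' ⁻¹' {c₂} = Sum.inr '' (Sum.inr ⁻¹' W) := by
      ext x
      cases x with
      | inl a => simp [hcol₁, Ne.symm hcc]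
      | inr i => simp [hcol₂]
    rw [cv, this, Set.ncard_image_of_injective _ Sum.inr_injective]
  have h0 : ∀ c, c ≠ c₁ → c ≠ c₂ → cv col' W c = 0 := by
    intro c hc1 hc2
    have : W ∩ col' ⁻¹' {c} = ∅ := by
      ext x
      cases x with
      | inl a => simp [hcol₁, Ne.symm hc1]
      | inr i => simp [hcol₂, Ne.symm hc2]
    rw [cv, this, Set.ncard_empty]
  rw [MOV, dif_neg hC, sup_two _ c₁ c₂ hcc h0, inf_two _ c₁ c₂ hcc h0, h1, h2,
    Nat.le_zero, Nat.sub_eq_zero_iff_le, max_le_iff, le_min_iff, le_min_iff]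
  omega

lemma conn_lift {V : Type*} {n : ℕ} (G : SimpleGraph V) (G' : SimpleGraph (V ⊕ Fin n))
    (hG'₁ : ∀ a b : V, G'.Adj (Sum.inl a) (Sum.inl b) ↔ G.Adj a b)
    (Q : Set (V ⊕ Fin n)) (w : V) (hw : Sum.inl w ∈ Q)
    (hQr : ∀ i : Fin n, Sum.inr i ∈ Q → G'.Adj (Sum.inr i) (Sum.inl w))
    (hVconn : (G.induce (Sum.inl ⁻¹' Q)).Connected) : (G'.induce Q).Connected := by
  have hwV : w ∈ Sum.inl ⁻¹' Q := hw
  let f : ↥(Sum.inl ⁻¹' Q) → ↥Q := fun x => ⟨Sum.inl x.1, x.2⟩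
  have hf : ∀ a b, (G.induce (Sum.inl ⁻¹' Q)).Adj a b → f a = f b ∨ (G'.induce Q).Adj (f a) (f b) := by
    rintro ⟨a, ha⟩ ⟨b, hb⟩ hab
    right
    simp only [SimpleGraph.comap_adj, Function.Embedding.coe_subtype] at hab ⊢
    exact (hG'₁ a b).mpr hab
  have anchor : ∀ x : ↥Q, (G'.induce Q).Reachable x ⟨Sum.inl w, hw⟩ := by
    rintro ⟨(a | i), hx⟩
    · exact reach_map f hf (hVconn.preconnected ⟨a, hx⟩ ⟨w, hwV⟩)
    · refine SimpleGraph.Adj.reachable ?_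
      simp only [SimpleGraph.comap_adj, Function.Embedding.coe_subtype]
      exact hQr i hx
  have : Nonempty ↥Q := ⟨⟨Sum.inl w, hw⟩⟩
  refine ⟨?_⟩
  intro x y
  exact (anchor x).trans (anchor y).symm

theorem stmt14 {V C : Type*} [Fintype V] [Fintype C] [DecidableEq C]
    (G : SimpleGraph V)
    (n : ℕ) (hn : Fintype.card V = n) (hn2 : 2 ≤ n) (hneven : Even n)
    (c₁ c₂ : C) (hcc : c₂ ≠ c₁)
    (v v' : V) (hvv : v ≠ v')
    (G' : SimpleGraph (V ⊕ Fin n))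
    (hG'₁ : ∀ a b : V, G'.Adj (Sum.inl a) (Sum.inl b) ↔ G.Adj a b)
    (hG'₂ : ∀ (i : Fin n) (a : V), G'.Adj (Sum.inr i) (Sum.inl a) ↔
      (((i : ℕ) < n / 2 ∧ a = v) ∨ (n / 2 ≤ (i : ℕ) ∧ a = v')))
    (hG'₃ : ∀ i j : Fin n, ¬ G'.Adj (Sum.inr i) (Sum.inr j))
    (col' : V ⊕ Fin n → C)
    (hcol₁ : ∀ a : V, col' (Sum.inl a) = c₁)
    (hcol₂ : ∀ i : Fin n, col' (Sum.inr i) = c₂) :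
    (∃ P : Fin 2 → Set (V ⊕ Fin n),
        (∀ i, (P i).Nonempty) ∧
        (∀ i j, i ≠ j → Disjoint (P i) (P j)) ∧
        (⋃ i, P i) = Set.univ ∧
        (∀ i, (G'.induce (P i)).Connected) ∧
        (∀ i, MOV col' (P i) ≤ 0)) ↔
      (∃ V₁ V₂ : Set V, Disjoint V₁ V₂ ∧ V₁ ∪ V₂ = Set.univ ∧
        (G.induce V₁).Connected ∧ (G.induce V₂).Connected ∧
        v ∈ V₁ ∧ v' ∈ V₂ ∧ V₁.ncard = n / 2 ∧ V₂.ncard = n / 2) := by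
  have hhigh : ({i : Fin n | (i : ℕ) < n / 2}ᶜ).ncard = n / 2 := by
    have h1 := ncard_partition (@disjoint_compl_right (Set (Fin n)) _ {i : Fin n | (i : ℕ) < n / 2})
      (Set.union_compl_self _)
    rw [Fintype.card_fin, ncard_lt_k (Nat.div_le_self n 2)] at h1
    obtain ⟨m, hm⟩ := hneven
    omega
  constructor
  · rintro ⟨P, hne, hdisjP, hcovP, hconnP, hfairP⟩
    have fair : ∀ j, (Sum.inl ⁻¹' P j).ncard = (Sum.inr ⁻¹' P j : Set (Fin n)).ncard :=
      fun j => (mov_char c₁ c₂ hcc col' hcol₁ hcol₂ (P j)).mp (hfairP j)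
    have hcov2 : P 0 ∪ P 1 = Set.univ := by
      rw [← hcovP]
      ext x
      simp [Set.mem_iUnion, Fin.exists_fin_two]
    have hd01 : Disjoint (P 0) (P 1) := hdisjP 0 1 (by decide)
    have hv : Sum.inl v ∈ P 0 ∪ P 1 := hcov2.symm ▸ Set.mem_univ _
    rcases hv with h | h
    · exact forward_core G n hn hn2 hneven v v' hvv G' hG'₁ hG'₂ hG'₃ (P 0) (P 1)
        hd01 hcov2 (hconnP 0) (hconnP 1) (fair 0) (fair 1) (hne 0) (hne 1) h
    · exact forward_core G n hn hn2 hneven v v' hvv G' hG'₁ hG'₂ hG'₃ (P 1) (P 0)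
        hd01.symm (by rw [Set.union_comm]; exact hcov2) (hconnP 1) (hconnP 0)
        (fair 1) (fair 0) (hne 1) (hne 0) h
  · rintro ⟨V₁, V₂, hd, hu, hc1, hc2, hv1, hv2, hcard1, hcard2⟩
    set S0 : Set (V ⊕ Fin n) :=
      {x | Sum.elim (· ∈ V₁) (fun i : Fin n => (i : ℕ) < n / 2) x} with hS0
    set S1 : Set (V ⊕ Fin n) :=
      {x | Sum.elim (· ∈ V₂) (fun i : Fin n => n / 2 ≤ (i : ℕ)) x} with hS1
    have hpre0 : Sum.inl ⁻¹' S0 = V₁ := rfl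
    have hpre1 : Sum.inl ⁻¹' S1 = V₂ := rfl
    have hpre0r : (Sum.inr ⁻¹' S0 : Set (Fin n)) = {i : Fin n | (i : ℕ) < n / 2} := rfl
    have hpre1r : (Sum.inr ⁻¹' S1 : Set (Fin n)) = {i : Fin n | (i : ℕ) < n / 2}ᶜ := by
      ext i
      simp [S1, not_lt]
    refine ⟨![S0, S1], ?_, ?_, ?_, ?_, ?_⟩
    · intro i
      fin_cases i
      · exact ⟨Sum.inl v, hv1⟩
      · exact ⟨Sum.inl v', hv2⟩
    · have key : Disjoint S0 S1 := by
        rw [Set.disjoint_left]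
        rintro (a | i) hx hy
        · exact Set.disjoint_left.mp hd hx hy
        · have hx' : (i : ℕ) < n / 2 := hx
          have hy' : n / 2 ≤ (i : ℕ) := hy
          omega
      intro i j hij
      fin_cases i <;> fin_cases j
      · exact absurd rfl hij
      · exact key
      · exact key.symm
      · exact absurd rfl hij
    · ext x
      simp only [Set.mem_iUnion, Fin.exists_fin_two, Matrix.cons_val_zero, Matrix.cons_val_one,
        Matrix.head_cons, Set.mem_univ, iff_true]
      cases x with
      | inl a =>
        have : a ∈ V₁ ∪ V₂ := hu.symm ▸ Set.mem_univ _
        rcases this with h | h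
        · exact Or.inl h
        · exact Or.inr h
      | inr i =>
        by_cases h : (i : ℕ) < n / 2
        · exact Or.inl h
        · exact Or.inr (not_lt.mp h)
    · intro j
      fin_cases j
      · simp only [Fin.zero_eta, Matrix.cons_val_zero]
        refine conn_lift G G' hG'₁ S0 v hv1 ?_ hc1
        intro i hi
        exact (hG'₂ i v).mpr (Or.inl ⟨hi, rfl⟩)
      · simp only [Fin.mk_one, Matrix.cons_val_one, Matrix.head_cons]
        refine conn_lift G G' hG'₁ S1 v' hv2 ?_ hc2
        intro i hi
        exact (hG'₂ i v').mpr (Or.inr ⟨hi, rfl⟩)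
    · intro j
      fin_cases j
      · simp only [Fin.zero_eta, Matrix.cons_val_zero]
        rw [mov_char c₁ c₂ hcc col' hcol₁ hcol₂, hpre0, hpre0r, hcard1,
          ncard_lt_k (Nat.div_le_self n 2)]
      · simp only [Fin.mk_one, Matrix.cons_val_one, Matrix.head_cons, Matrix.cons_val_zero]
        rw [mov_char c₁ c₂ hcc col' hcol₁ hcol₂, hpre1, hpre1r, hcard2, hhigh]
end
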